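/- arXiv:2605.28488 — 11 statements merged into one kernel-verified Lean document; each statement's English description precedes it below -/
import Mathlib

section
/- Let N, K be positive integers, let d : ℝ × ℝ → [0,∞) satisfy d(a,b) = 0 if and only if a = b, let Z : {1,…,N} → {1,…,K} be a surjective assignment with one-hot membership matrix Z ∈ {0,1}^{N×K} (Z_{ik} = 1 iff Z_i = k), and let Θ ∈ ℝ^{K×K} satisfy: for all k ≠ k' there exists l with Θ_{kl} ≠ Θ_{k'l} or Θ_{lk} ≠ Θ_{lk'}. Define F(T) := ∑_{i,j=1}^N ∑_{k,l=1}^K d(Θ_{Z_i Z_j}, Θ_{kl}) T_{ik} T_{jl} for T ∈ 𝒰_K(1_N/N). Then the minimizers of F over 𝒰_K(1_N/N) are exactly the matrices of the form T = (1/N) Z P_σ where P_σ is a K×K permutation matrix satisfying Θ = P_σ Θ P_σ^⊤; moreover F vanishes exactly at these matrices. -/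
open Finset

/-- `𝒰_K(1_N/N)`: matrices `T ∈ ℝ^{N×K}` with nonnegative entries whose rows sum to `1/N`. -/
def UK (N K : ℕ) : Set (Matrix (Fin N) (Fin K) ℝ) :=
  {T | (∀ i k, 0 ≤ T i k) ∧ ∀ i, ∑ k, T i k = 1 / (N : ℝ)}

/-- the minimizers of
`F(T) = ∑_{i,j,k,l} d(Θ_{Z_i Z_j}, Θ_{kl}) T_{ik} T_{jl}` over `𝒰_K(1_N/N)` are exactly the
matrices `T = (1/N) Z P_σ` for permutations `σ` leaving `Θ` invariant, and `F` vanishes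
exactly at these matrices. -/
theorem stmt0 (N K : ℕ) (hN : 0 < N) (hK : 0 < K)
    (d : ℝ → ℝ → ℝ) (hd_nonneg : ∀ a b, 0 ≤ d a b)
    (hd_eq : ∀ a b, d a b = 0 ↔ a = b)
    (Z : Fin N → Fin K) (hZ : Function.Surjective Z)
    (Θ : Matrix (Fin K) (Fin K) ℝ)
    (hA1 : ∀ k k', k ≠ k' → ∃ l, Θ k l ≠ Θ k' l ∨ Θ l k ≠ Θ l k')
    (F : Matrix (Fin N) (Fin K) ℝ → ℝ)
    (hF : ∀ T, F T = ∑ i, ∑ j, ∑ k, ∑ l, d (Θ (Z i) (Z j)) (Θ k l) * T i k * T j l) :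
    ∀ T ∈ UK N K,
      (IsMinOn F (UK N K) T ↔
        ∃ σ : Equiv.Perm (Fin K), (∀ k l, Θ (σ k) (σ l) = Θ k l) ∧
          ∀ i k, T i k = if k = σ (Z i) then 1 / (N : ℝ) else 0) ∧
      (F T = 0 ↔
        ∃ σ : Equiv.Perm (Fin K), (∀ k l, Θ (σ k) (σ l) = Θ k l) ∧
          ∀ i k, T i k = if k = σ (Z i) then 1 / (N : ℝ) else 0) := by
  have hNpos : (0:ℝ) < 1 / (N : ℝ) := by
    have : (0:ℝ) < (N:ℝ) := by exact_mod_cast hN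
    positivity
  -- F is nonnegative on UK
  have hFnonneg : ∀ T' ∈ UK N K, 0 ≤ F T' := by
    intro T' hT'
    rw [hF]
    refine Finset.sum_nonneg fun i _ => Finset.sum_nonneg fun j _ =>
      Finset.sum_nonneg fun k _ => Finset.sum_nonneg fun l _ => ?_
    exact mul_nonneg (mul_nonneg (hd_nonneg _ _) (hT'.1 i k)) (hT'.1 j l)
  -- backward direction: matrices of the stated form make F vanish
  have hback : ∀ (T' : Matrix (Fin N) (Fin K) ℝ) (σ : Equiv.Perm (Fin K)),
      (∀ k l, Θ (σ k) (σ l) = Θ k l) →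
      (∀ i k, T' i k = if k = σ (Z i) then 1 / (N : ℝ) else 0) → F T' = 0 := by
    intro T' σ hσ hform
    rw [hF]
    refine Finset.sum_eq_zero fun i _ => Finset.sum_eq_zero fun j _ =>
      Finset.sum_eq_zero fun k _ => Finset.sum_eq_zero fun l _ => ?_
    rw [hform i k, hform j l]
    by_cases hk : k = σ (Z i)
    · by_cases hl : l = σ (Z j)
      · subst hk; subst hl
        have : d (Θ (Z i) (Z j)) (Θ (σ (Z i)) (σ (Z j))) = 0 := by
          rw [hσ]; exact (hd_eq _ _).mpr rfl
        simp [this]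
      · simp [hl]
    · simp [hk]
  -- a canonical zero of F in UK (σ = identity)
  set T₀ : Matrix (Fin N) (Fin K) ℝ := fun i k => if k = Z i then 1 / (N : ℝ) else 0 with hT₀def
  have hT₀UK : T₀ ∈ UK N K := by
    constructor
    · intro i k
      by_cases h : k = Z i <;> simp [hT₀def, h, le_of_lt hNpos]
    · intro i
      simp [hT₀def]
  have hFT₀ : F T₀ = 0 := by
    refine hback T₀ 1 (by simp) fun i k => by simp [hT₀def]
  intro T hT
  obtain ⟨hTpos, hTrow⟩ := hT
  -- main equivalence : F T = 0 ↔ ∃ σ ...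
  have main : F T = 0 ↔
      ∃ σ : Equiv.Perm (Fin K), (∀ k l, Θ (σ k) (σ l) = Θ k l) ∧
        ∀ i k, T i k = if k = σ (Z i) then 1 / (N : ℝ) else 0 := by
    constructor
    · intro h0
      -- each term vanishes
      have h0' : ∑ p : Fin N × Fin N × Fin K × Fin K,
          d (Θ (Z p.1) (Z p.2.1)) (Θ p.2.2.1 p.2.2.2) * T p.1 p.2.2.1 * T p.2.1 p.2.2.2 = 0 := by
        rw [hF] at h0
        simpa [Fintype.sum_prod_type] using h0
      have hz := (Finset.sum_eq_zero_iff_of_nonneg (fun p _ =>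
        mul_nonneg (mul_nonneg (hd_nonneg _ _) (hTpos p.1 p.2.2.1)) (hTpos p.2.1 p.2.2.2))).mp h0'
      have key : ∀ i j k l, 0 < T i k → 0 < T j l → Θ (Z i) (Z j) = Θ k l := by
        intro i j k l hik hjl
        have := hz ⟨i, j, k, l⟩ (Finset.mem_univ _)
        simp only at this
        have hd0 : d (Θ (Z i) (Z j)) (Θ k l) = 0 := by
          by_contra hd
          have := mul_ne_zero (mul_ne_zero hd (ne_of_gt hik)) (ne_of_gt hjl)
          exact this ‹_›
        exact (hd_eq _ _).mp hd0
      -- basic cluster fact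
      have B : ∀ c e k l, (∃ i, Z i = c ∧ 0 < T i k) → (∃ j, Z j = e ∧ 0 < T j l) →
          Θ k l = Θ c e := by
        rintro c e k l ⟨i, rfl, hi⟩ ⟨j, rfl, hj⟩
        exact (key i j k l hi hj).symm
      -- each cluster is nonempty
      have hne : ∀ c, ∃ k, ∃ i, Z i = c ∧ 0 < T i k := by
        intro c
        obtain ⟨i, rfl⟩ := hZ c
        by_contra h
        push_neg at h
        have hz0 : ∑ k, T i k = 0 := Finset.sum_eq_zero fun k _ =>
          le_antisymm (h k i rfl) (hTpos i k)
        rw [hTrow i] at hz0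
        exact absurd hz0 (ne_of_gt hNpos)
      choose τ hτ using hne
      -- disjointness of clusters
      have hdisj : ∀ c c' k, (∃ i, Z i = c ∧ 0 < T i k) → (∃ i, Z i = c' ∧ 0 < T i k) →
          c = c' := by
        intro c c' k h1 h2
        by_contra hcc
        obtain ⟨l, hl⟩ := hA1 c c' hcc
        have e1 : Θ k (τ l) = Θ c l := B c l k (τ l) h1 (hτ l)
        have e2 : Θ k (τ l) = Θ c' l := B c' l k (τ l) h2 (hτ l)
        have e3 : Θ (τ l) k = Θ l c := B l c (τ l) k (hτ l) h1
        have e4 : Θ (τ l) k = Θ l c' := B l c' (τ l) k (hτ l) h2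
        rcases hl with hl | hl
        · exact hl (e1.symm.trans e2)
        · exact hl (e3.symm.trans e4)
      have hinj : Function.Injective τ := by
        intro c c' h
        exact hdisj c c' (τ c) (hτ c) (h ▸ hτ c')
      have hbij : Function.Bijective τ := Finite.injective_iff_bijective.mp hinj
      -- uniqueness within clusters
      have huniq : ∀ c k, (∃ i, Z i = c ∧ 0 < T i k) → k = τ c := by
        intro c k hk
        by_contra hkk
        obtain ⟨l, hl⟩ := hA1 k (τ c) hkk
        obtain ⟨e, rfl⟩ := hbij.2 l
        have e1 : Θ k (τ e) = Θ c e := B c e k (τ e) hk (hτ e)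
        have e2 : Θ (τ c) (τ e) = Θ c e := B c e (τ c) (τ e) (hτ c) (hτ e)
        have e3 : Θ (τ e) k = Θ e c := B e c (τ e) k (hτ e) hk
        have e4 : Θ (τ e) (τ c) = Θ e c := B e c (τ e) (τ c) (hτ e) (hτ c)
        rcases hl with hl | hl
        · exact hl (e1.trans e2.symm)
        · exact hl (e3.trans e4.symm)
      refine ⟨Equiv.ofBijective τ hbij, fun k l => B k l (τ k) (τ l) (hτ k) (hτ l), ?_⟩
      intro i k
      have hzero' : ∀ k', k' ≠ τ (Z i) → T i k' = 0 := by
        intro k' hk'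
        rcases (hTpos i k').lt_or_eq with hlt | heq
        · exact absurd (huniq (Z i) k' ⟨i, rfl, hlt⟩) hk'
        · exact heq.symm
      show T i k = if k = Equiv.ofBijective τ hbij (Z i) then 1 / (N:ℝ) else 0
      have hco : Equiv.ofBijective τ hbij (Z i) = τ (Z i) := rfl
      rw [hco]
      by_cases hk : k = τ (Z i)
      · subst hk
        have hsum : ∑ k', T i k' = T i (τ (Z i)) :=
          Finset.sum_eq_single_of_mem (τ (Z i)) (Finset.mem_univ _)
            (fun b _ hb => hzero' b hb)
        simp [← hsum, hTrow i]
      · simp [hk, hzero' k hk]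
    · rintro ⟨σ, hσ, hform⟩
      exact hback T σ hσ hform
  constructor
  · rw [main.symm] at *
    constructor
    · intro hm
      have h1 : F T ≤ F T₀ := isMinOn_iff.mp hm T₀ hT₀UK
      rw [hFT₀] at h1
      exact le_antisymm h1 (hFnonneg T ⟨hTpos, hTrow⟩)
    · intro h0
      refine isMinOn_iff.mpr fun x hx => ?_
      rw [h0]
      exact hFnonneg x hx
  · exact main
end

section
/- Consider a Bernoulli stochastic block model with N nodes, K clusters, latent labels Z (one-hot membership matrix Z ∈ {0,1}^{N×K}, each cluster nonempty) and connectivity matrix Θ ∈ [0,1]^{K×K} satisfying: for all k ≠ k' there exists l with Θ_{kl} ≠ Θ_{k'l} or Θ_{lk} ≠ Θ_{lk'}, and such that conditionally on Z the entries A_{ij} satisfy E[A_{ij} | Z] = Θ_{Z_i Z_j}. Let U : [0,1] → ℝ be strictly convex and continuously differentiable on (0,1) with D_U the induced Bregman divergence, and assume U'(Θ_{kl}) is finite for all k,l. Then the minimizers over T ∈ 𝒰_K(1_N/N) of the conditional expected loss 𝓛_U(T,Θ) := E[∑_{i,j,k,l} D_U(A_{ij}, Θ_{kl}) T_{ik}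 T_{jl} | Z] are exactly the matrices T* = (1/N) Z P_σ where P_σ is a permutation matrix such that Θ = P_σ Θ P_σ^⊤. -/
open Finset MeasureTheory

/-- Bregman divergence `D_U(a,b) = U(a) − U(b) − U'(b)(a−b)`. -/
noncomputable def DU (U : ℝ → ℝ) (a b : ℝ) : ℝ := U a - U b - deriv U b * (a - b)

lemma DU_self (U : ℝ → ℝ) (p : ℝ) : DU U p p = 0 := by simp [DU]

lemma DU_pos {U : ℝ → ℝ} (hU : StrictConvexOn ℝ (Set.Icc 0 1) U) {p q : ℝ}
    (hp : p ∈ Set.Icc (0:ℝ) 1) (hq : q ∈ Set.Icc (0:ℝ) 1)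
    (hd : DifferentiableAt ℝ U q) (hne : p ≠ q) : 0 < DU U p q := by
  rcases hne.lt_or_gt with h | h
  · have h1 := hU.slope_lt_deriv hp hq h hd
    rw [slope_def_field] at h1
    have hqp : (0:ℝ) < q - p := by linarith
    rw [div_lt_iff₀ hqp] at h1
    unfold DU; nlinarith
  · have h1 := hU.deriv_lt_slope hq hp h hd
    rw [slope_def_field] at h1
    have hpq : (0:ℝ) < p - q := by linarith
    rw [lt_div_iff₀ hpq] at h1
    unfold DU; nlinarith

lemma DU_nonneg {U : ℝ → ℝ} (hU : StrictConvexOn ℝ (Set.Icc 0 1) U) {p q : ℝ}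
    (hp : p ∈ Set.Icc (0:ℝ) 1) (hq : q ∈ Set.Icc (0:ℝ) 1)
    (hd : DifferentiableAt ℝ U q) : 0 ≤ DU U p q := by
  rcases eq_or_ne p q with rfl | hne
  · simp [DU]
  · exact (DU_pos hU hp hq hd hne).le

lemma sum4_split {K : ℕ} (c : ℝ) (f : Fin K → Fin K → ℝ) (u v : Fin K → ℝ) :
    ∑ k, ∑ l, (c + f k l) * u k * v l
      = c * ((∑ k, u k) * (∑ l, v l)) + ∑ k, ∑ l, f k l * u k * v l := by
  rw [Finset.sum_mul_sum]
  simp only [Finset.mul_sum, ← Finset.sum_add_distrib]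
  exact Finset.sum_congr rfl fun k _ => Finset.sum_congr rfl fun l _ => by ring

/-- The "pure Bregman" part of the loss. -/
noncomputable def Gfun {N K : ℕ} (Z : Fin N → Fin K) (Θ : Matrix (Fin K) (Fin K) ℝ)
    (U : ℝ → ℝ) (S : Matrix (Fin N) (Fin K) ℝ) : ℝ :=
  ∑ i, ∑ j, ∑ k, ∑ l, DU U (Θ (Z i) (Z j)) (Θ k l) * S i k * S j l

/-- The constant part of the loss. -/
noncomputable def Cconst (N : ℕ) {K : ℕ} (Z : Fin N → Fin K) (Θ : Matrix (Fin K) (Fin K) ℝ)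
    (U : ℝ → ℝ) : ℝ :=
  ∑ i : Fin N, ∑ j : Fin N,
    (U 0 + (U 1 - U 0) * Θ (Z i) (Z j) - U (Θ (Z i) (Z j))) * ((1/(N:ℝ)) * (1/(N:ℝ)))

/-- for a Bernoulli SBM (conditionally on the labels `Z`, the entries `A_{ij}`
take values in `{0,1}` with mean `Θ_{Z_i Z_j}`), the minimizers over `𝒰_K(1_N/N)` of the
conditional expected Bregman loss `𝓛_U(T,Θ) = E[∑ D_U(A_{ij},Θ_{kl}) T_{ik}T_{jl} | Z]`
are exactly the matrices `T* = (1/N) Z P_σ` for permutations `σ` with `Θ = P_σ Θ P_σᵀ`. -/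
theorem stmt1 (N K : ℕ) (hN : 0 < N) (hK : 0 < K)
    (Ω : Type*) [MeasurableSpace Ω] (μ : Measure Ω) [IsProbabilityMeasure μ]
    (Z : Fin N → Fin K) (hZ : Function.Surjective Z)
    (Θ : Matrix (Fin K) (Fin K) ℝ) (hΘ01 : ∀ k l, Θ k l ∈ Set.Icc (0 : ℝ) 1)
    (hA1 : ∀ k k', k ≠ k' → ∃ l, Θ k l ≠ Θ k' l ∨ Θ l k ≠ Θ l k')
    (A : Ω → Fin N → Fin N → ℝ)
    (hAmeas : ∀ i j, Measurable fun ω => A ω i j)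
    (hA01 : ∀ ω i j, A ω i j = 0 ∨ A ω i j = 1)
    (hAmean : ∀ i j, ∫ ω, A ω i j ∂μ = Θ (Z i) (Z j))
    (U : ℝ → ℝ)
    (hUconv : StrictConvexOn ℝ (Set.Icc 0 1) U)
    (hUdiff : ∀ x ∈ Set.Ioo (0 : ℝ) 1, DifferentiableAt ℝ U x)
    (hUderivCont : ContinuousOn (deriv U) (Set.Ioo 0 1))
    (hUderivΘ : ∀ k l, DifferentiableAt ℝ U (Θ k l))
    (calL : Matrix (Fin N) (Fin K) ℝ → ℝ)
    (hcalL : ∀ T, calL T =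
      ∫ ω, ∑ i, ∑ j, ∑ k, ∑ l, DU U (A ω i j) (Θ k l) * T i k * T j l ∂μ) :
    ∀ T ∈ UK N K,
      IsMinOn calL (UK N K) T ↔
        ∃ σ : Equiv.Perm (Fin K), (∀ k l, Θ (σ k) (σ l) = Θ k l) ∧
          ∀ i k, T i k = if k = σ (Z i) then 1 / (N : ℝ) else 0 := by
  have hNne : (1:ℝ)/(N:ℝ) ≠ 0 := one_div_ne_zero (Nat.cast_ne_zero.mpr hN.ne')
  -- integrability of the entries
  have hInt : ∀ i j, Integrable (fun ω => A ω i j) μ := by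
    intro i j
    refine (integrable_const (1:ℝ)).mono' (hAmeas i j).aestronglyMeasurable ?_
    exact Filter.Eventually.of_forall fun ω => by rcases hA01 ω i j with h | h <;> simp [h]
  -- the loss decomposes as a constant plus the nonnegative Bregman part
  have hcalL' : ∀ S ∈ UK N K, calL S = Cconst N Z Θ U + Gfun Z Θ U S := by
    intro S hS
    rw [hcalL S]
    have hI : ∀ i j : Fin N, Integrable (fun ω =>
        (∑ k, ∑ l, DU U 0 (Θ k l) * S i k * S j l)
        + (∑ k, ∑ l, (DU U 1 (Θ k l) - DU U 0 (Θ k l)) * S i k * S j l) * A ω i j) μ :=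
      fun i j => (integrable_const _).add ((hInt i j).const_mul _)
    have hpt : ∀ ω, (∑ i, ∑ j, ∑ k, ∑ l, DU U (A ω i j) (Θ k l) * S i k * S j l)
        = ∑ i, ∑ j, ((∑ k, ∑ l, DU U 0 (Θ k l) * S i k * S j l)
            + (∑ k, ∑ l, (DU U 1 (Θ k l) - DU U 0 (Θ k l)) * S i k * S j l) * A ω i j) := by
      intro ω
      refine Finset.sum_congr rfl fun i _ => Finset.sum_congr rfl fun j _ => ?_
      rcases hA01 ω i j with h | h
      · simp [h]
      · rw [h, mul_one, ← Finset.sum_add_distrib]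
        refine Finset.sum_congr rfl fun k _ => ?_
        rw [← Finset.sum_add_distrib]
        exact Finset.sum_congr rfl fun l _ => by ring
    calc (∫ ω, ∑ i, ∑ j, ∑ k, ∑ l, DU U (A ω i j) (Θ k l) * S i k * S j l ∂μ)
        = ∫ ω, ∑ i, ∑ j, ((∑ k, ∑ l, DU U 0 (Θ k l) * S i k * S j l)
            + (∑ k, ∑ l, (DU U 1 (Θ k l) - DU U 0 (Θ k l)) * S i k * S j l) * A ω i j) ∂μ :=
          integral_congr_ae (Filter.Eventually.of_forall hpt)
      _ = ∑ i, ∑ j, ((∑ k, ∑ l, DU U 0 (Θ k l) * S i k * S j l)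
            + (∑ k, ∑ l, (DU U 1 (Θ k l) - DU U 0 (Θ k l)) * S i k * S j l)
              * Θ (Z i) (Z j)) := by
          rw [integral_finset_sum _ (fun i _ => integrable_finset_sum _ (fun j _ => hI i j))]
          refine Finset.sum_congr rfl fun i _ => ?_
          rw [integral_finset_sum _ (fun j _ => hI i j)]
          refine Finset.sum_congr rfl fun j _ => ?_
          rw [integral_add (integrable_const _) ((hInt i j).const_mul _), integral_const,
            integral_const_mul, hAmean]
          simp
      _ = Cconst N Z Θ U + Gfun Z Θ U S := by
          unfold Cconst Gfun
          rw [← Finset.sum_add_distrib]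
          refine Finset.sum_congr rfl fun i _ => ?_
          rw [← Finset.sum_add_distrib]
          refine Finset.sum_congr rfl fun j _ => ?_
          have e1 : (∑ k, ∑ l, DU U 0 (Θ k l) * S i k * S j l)
              + (∑ k, ∑ l, (DU U 1 (Θ k l) - DU U 0 (Θ k l)) * S i k * S j l) * Θ (Z i) (Z j)
              = ∑ k, ∑ l, ((U 0 + (U 1 - U 0) * Θ (Z i) (Z j) - U (Θ (Z i) (Z j)))
                  + DU U (Θ (Z i) (Z j)) (Θ k l)) * S i k * S j l := by
            simp only [Finset.sum_mul, ← Finset.sum_add_distrib]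
            refine Finset.sum_congr rfl fun k _ => Finset.sum_congr rfl fun l _ => ?_
            simp only [DU]; ring
          rw [e1, sum4_split, hS.2 i, hS.2 j]
  -- the Bregman part is nonnegative on UK
  have hGnn : ∀ S ∈ UK N K, 0 ≤ Gfun Z Θ U S := by
    intro S hS
    refine Finset.sum_nonneg fun i _ => Finset.sum_nonneg fun j _ =>
      Finset.sum_nonneg fun k _ => Finset.sum_nonneg fun l _ => ?_
    exact mul_nonneg (mul_nonneg
      (DU_nonneg hUconv (hΘ01 _ _) (hΘ01 _ _) (hUderivΘ k l)) (hS.1 i k)) (hS.1 j l)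
  -- the structured matrices belong to UK and annihilate the Bregman part
  have hform_mem : ∀ σ : Equiv.Perm (Fin K),
      (fun i k => if k = σ (Z i) then 1/(N:ℝ) else 0) ∈ UK N K := by
    intro σ
    constructor
    · intro i k
      by_cases h : k = σ (Z i) <;> simp [h]
    · intro i; simp
  have hform_G : ∀ σ : Equiv.Perm (Fin K), (∀ k l, Θ (σ k) (σ l) = Θ k l) →
      Gfun Z Θ U (fun i k => if k = σ (Z i) then 1/(N:ℝ) else 0) = 0 := by
    intro σ hσ
    refine Finset.sum_eq_zero fun i _ => Finset.sum_eq_zero fun j _ =>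
      Finset.sum_eq_zero fun k _ => Finset.sum_eq_zero fun l _ => ?_
    by_cases hk : k = σ (Z i)
    · by_cases hl : l = σ (Z j)
      · subst hk; subst hl
        rw [hσ (Z i) (Z j), DU_self, zero_mul, zero_mul]
      · simp [hl]
    · simp [hk]
  intro T hT
  constructor
  · intro hmin
    -- the min value is the constant, so the Bregman part of T vanishes
    have hle : calL T ≤ calL (fun i k => if k = (Equiv.refl (Fin K)) (Z i) then 1/(N:ℝ) else 0) :=
      isMinOn_iff.mp hmin _ (hform_mem (Equiv.refl (Fin K)))
    rw [hcalL' T hT, hcalL' _ (hform_mem (Equiv.refl (Fin K))),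
      hform_G (Equiv.refl (Fin K)) (fun k l => rfl)] at hle
    have hG0 : Gfun Z Θ U T = 0 := le_antisymm (by linarith) (hGnn T hT)
    -- each term of the Bregman part vanishes
    have hterm0 : ∀ i j k l, DU U (Θ (Z i) (Z j)) (Θ k l) * T i k * T j l = 0 := by
      intro i j k l
      have hnn : ∀ i j k l, (0:ℝ) ≤ DU U (Θ (Z i) (Z j)) (Θ k l) * T i k * T j l :=
        fun i j k l => mul_nonneg (mul_nonneg
          (DU_nonneg hUconv (hΘ01 _ _) (hΘ01 _ _) (hUderivΘ k l)) (hT.1 i k)) (hT.1 j l)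
      have hch : DU U (Θ (Z i) (Z j)) (Θ k l) * T i k * T j l ≤ Gfun Z Θ U T := by
        calc DU U (Θ (Z i) (Z j)) (Θ k l) * T i k * T j l
            ≤ ∑ l', DU U (Θ (Z i) (Z j)) (Θ k l') * T i k * T j l' :=
              Finset.single_le_sum (fun l' _ => hnn i j k l') (Finset.mem_univ l)
          _ ≤ ∑ k', ∑ l', DU U (Θ (Z i) (Z j)) (Θ k' l') * T i k' * T j l' :=
              Finset.single_le_sum
                (fun k' _ => Finset.sum_nonneg fun l' _ => hnn i j k' l') (Finset.mem_univ k)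
          _ ≤ ∑ j', ∑ k', ∑ l', DU U (Θ (Z i) (Z j')) (Θ k' l') * T i k' * T j' l' :=
              Finset.single_le_sum (fun j' _ => Finset.sum_nonneg fun k' _ =>
                Finset.sum_nonneg fun l' _ => hnn i j' k' l') (Finset.mem_univ j)
          _ ≤ Gfun Z Θ U T :=
              Finset.single_le_sum (fun i' _ => Finset.sum_nonneg fun j' _ =>
                Finset.sum_nonneg fun k' _ => Finset.sum_nonneg fun l' _ => hnn i' j' k' l')
                (Finset.mem_univ i)
      have := hnn i j k l
      rw [hG0] at hch
      linarith
    -- the key structural consequence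
    have key : ∀ i j k l, T i k ≠ 0 → T j l ≠ 0 → Θ k l = Θ (Z i) (Z j) := by
      intro i j k l hik hjl
      by_contra hne
      have hpos : 0 < DU U (Θ (Z i) (Z j)) (Θ k l) :=
        DU_pos hUconv (hΘ01 _ _) (hΘ01 _ _) (hUderivΘ k l) (fun h => hne h.symm)
      have hik' : 0 < T i k := (hT.1 i k).lt_of_ne (Ne.symm hik)
      have hjl' : 0 < T j l := (hT.1 j l).lt_of_ne (Ne.symm hjl)
      exact absurd (hterm0 i j k l) (ne_of_gt (mul_pos (mul_pos hpos hik') hjl'))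
    -- every row has nonempty support
    have hsupp : ∀ i, ∃ k, T i k ≠ 0 := by
      intro i
      by_contra h
      push_neg at h
      have := hT.2 i
      rw [Finset.sum_eq_zero (fun k _ => h k)] at this
      exact hNne this.symm
    -- nodes sharing a supported column have the same label
    have hsame : ∀ i j k, T i k ≠ 0 → T j k ≠ 0 → Z i = Z j := by
      intro i j k hik hjk
      by_contra hne
      obtain ⟨m, hm⟩ := hA1 (Z i) (Z j) hne
      obtain ⟨r, hr⟩ := hZ m
      obtain ⟨l, hl⟩ := hsupp r
      rcases hm with hm | hm
      · exact hm (by rw [← hr, ← key i r k l hik hl, key j r k l hjk hl])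
      · exact hm (by rw [← hr, ← key r i l k hl hik, key r j l k hl hjk])
    -- build the permutation
    choose rep hrep using hZ
    choose col hcol using fun a => hsupp (rep a)
    have hinj : Function.Injective col := by
      intro a b hab
      have := hsame (rep a) (rep b) (col a) (hcol a) (hab ▸ hcol b)
      rwa [hrep a, hrep b] at this
    have hbij : Function.Bijective col := Finite.injective_iff_bijective.mp hinj
    have huniq : ∀ i k, T i k ≠ 0 → k = col (Z i) := by
      intro i k hik
      obtain ⟨a, ha⟩ := hbij.2 k
      have := hsame i (rep a) k hik (ha ▸ hcol a)
      rw [hrep a] at this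
      rw [← ha, ← this]
    refine ⟨Equiv.ofBijective col hbij, ?_, ?_⟩
    · intro a b
      have h := key (rep a) (rep b) (col a) (col b) (hcol a) (hcol b)
      rw [hrep a, hrep b] at h
      simpa [Equiv.ofBijective] using h
    · intro i k
      have hσ : (Equiv.ofBijective col hbij) (Z i) = col (Z i) := rfl
      by_cases hk : k = (Equiv.ofBijective col hbij) (Z i)
      · rw [if_pos hk]
        have hone : ∑ k', T i k' = T i (col (Z i)) := by
          refine Finset.sum_eq_single (col (Z i)) (fun b _ hb => ?_)
            (fun h => absurd (Finset.mem_univ _) h)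
          by_contra hb0
          exact hb (huniq i b hb0)
        rw [hk, hσ, ← hone]
        exact hT.2 i
      · rw [if_neg hk]
        by_contra h0
        exact hk ((huniq i k h0).trans hσ.symm)
  · rintro ⟨σ, hσ, hTform⟩
    have hTeq : T = (fun i k => if k = σ (Z i) then 1/(N:ℝ) else 0) := by
      funext i k; exact hTform i k
    refine isMinOn_iff.mpr fun S hS => ?_
    rw [hcalL' T hT, hcalL' S hS, hTeq, hform_G σ hσ]
    have := hGnn S hS
    linarith
end

section
/- Consider an SBM whose edge entries, conditionally on latent labels Z (one-hot matrix Z ∈ {0,1}^{N×K}, each cluster nonempty), are independently distributed as A_{ij} ~ p(· | Θ_{Z_i Z_j}) for an identifiable parametric family {p(·|θ)} (so that the Kullback–Leibler divergence d(θ₁,θ₂) := E_{X∼p(·|θ₁)}[log(p(X|θ₁)/p(X|θ₂))] vanishes only when θ₁ = θ₂), and with Θ ∈ ℝ^{K×K} satisfying: for all k ≠ k' there exists l with Θ_{kl} ≠ Θ_{k'l} or Θ_{lk} ≠ Θ_{lk'}. Then the minimizers over T ∈ 𝒰_K(1_N/N) of the conditional expected loss 𝓛_p(T,Θ) := E[∑_{i,j,k,l}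 (−log p(A_{ij} | Θ_{kl})) T_{ik} T_{jl} | Z] are exactly the matrices T* = (1/N) Z P_σ where P_σ is a permutation matrix such that Θ = P_σ Θ P_σ^⊤. -/
open Finset MeasureTheory

/-- for an SBM whose entries are conditionally distributed as `A_{ij} ~ p(·|Θ_{Z_iZ_j})`
for an identifiable parametric family of densities `p(·|θ)` (w.r.t. a base measure `ν`), the
minimizers over `𝒰_K(1_N/N)` of the conditional expected negative log-likelihood loss
`𝓛_p(T,Θ) = E[∑ (−log p(A_{ij}|Θ_{kl})) T_{ik}T_{jl} | Z]` are exactly the matrices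
`T* = (1/N) Z P_σ` for permutations `σ` with `Θ = P_σ Θ P_σᵀ`. -/
theorem stmt2 (N K : ℕ) (hN : 0 < N) (hK : 0 < K)
    (E : Type*) [MeasurableSpace E] (ν : Measure E)
    -- the parametric family of densities `p(·|θ)` w.r.t. `ν`
    (p : ℝ → E → ℝ)
    (hp_nonneg : ∀ θ x, 0 ≤ p θ x)
    (hp_prob : ∀ θ, ∫ x, p θ x ∂ν = 1)
    (hp_pos : ∀ θ₁ θ₂, ∀ᵐ x ∂ν, p θ₁ x ≠ 0 → p θ₂ x ≠ 0)
    (hp_int : ∀ θ₁ θ₂, Integrable (fun x => Real.log (p θ₂ x) * p θ₁ x) ν)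
    -- the Kullback–Leibler divergence `d(θ₁,θ₂) = E_{X∼p(·|θ₁)}[log (p(X|θ₁)/p(X|θ₂))]`
    (d : ℝ → ℝ → ℝ)
    (hd : ∀ θ₁ θ₂, d θ₁ θ₂ = ∫ x, Real.log (p θ₁ x / p θ₂ x) * p θ₁ x ∂ν)
    (hd_nonneg : ∀ θ₁ θ₂, 0 ≤ d θ₁ θ₂)
    -- identifiability: the KL divergence vanishes only on the diagonal
    (hd_eq : ∀ θ₁ θ₂, d θ₁ θ₂ = 0 ↔ θ₁ = θ₂)
    (Z : Fin N → Fin K) (hZ : Function.Surjective Z)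
    (Θ : Matrix (Fin K) (Fin K) ℝ)
    (hA1 : ∀ k k', k ≠ k' → ∃ l, Θ k l ≠ Θ k' l ∨ Θ l k ≠ Θ l k')
    -- the conditional expected loss `𝓛_p(T,Θ)`, written with `E[−log p(A_{ij}|Θ_{kl}) | Z]`
    -- computed under `A_{ij} ∼ p(·|Θ_{Z_i Z_j})`
    (calL : Matrix (Fin N) (Fin K) ℝ → ℝ)
    (hcalL : ∀ T, calL T = ∑ i, ∑ j, ∑ k, ∑ l,
      (∫ x, (-Real.log (p (Θ k l) x)) * p (Θ (Z i) (Z j)) x ∂ν) * T i k * T j l) :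
    ∀ T ∈ UK N K,
      IsMinOn calL (UK N K) T ↔
        ∃ σ : Equiv.Perm (Fin K), (∀ k l, Θ (σ k) (σ l) = Θ k l) ∧
          ∀ i k, T i k = if k = σ (Z i) then 1 / (N : ℝ) else 0 := by
  have hN0 : (N : ℝ) ≠ 0 := Nat.cast_ne_zero.mpr hN.ne'
  have hNpos : (0:ℝ) < 1 / (N:ℝ) := by positivity
  -- the key integral identity
  have key : ∀ θ θ', (∫ x, (-Real.log (p θ' x)) * p θ x ∂ν)
      = d θ θ' + ∫ x, (-Real.log (p θ x)) * p θ x ∂ν := by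
    intro θ θ'
    have hae : (fun x => Real.log (p θ x / p θ' x) * p θ x)
        =ᵐ[ν] fun x => Real.log (p θ x) * p θ x - Real.log (p θ' x) * p θ x := by
      filter_upwards [hp_pos θ θ'] with x hx
      by_cases h0 : p θ x = 0
      · simp [h0]
      · rw [Real.log_div h0 (hx h0)]; ring
    have hdd : d θ θ' = (∫ x, Real.log (p θ x) * p θ x ∂ν)
        - ∫ x, Real.log (p θ' x) * p θ x ∂ν := by
      rw [hd, integral_congr_ae hae, integral_sub (hp_int θ θ) (hp_int θ θ')]
    have e1 : (∫ x, (-Real.log (p θ' x)) * p θ x ∂ν)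
        = - ∫ x, Real.log (p θ' x) * p θ x ∂ν := by
      rw [← integral_neg]; congr 1; funext x; ring
    have e2 : (∫ x, (-Real.log (p θ x)) * p θ x ∂ν)
        = - ∫ x, Real.log (p θ x) * p θ x ∂ν := by
      rw [← integral_neg]; congr 1; funext x; ring
    rw [e1, e2, hdd]; ring
  set DD : Matrix (Fin N) (Fin K) ℝ → ℝ := fun S =>
    ∑ i, ∑ j, ∑ k, ∑ l, d (Θ (Z i) (Z j)) (Θ k l) * S i k * S j l with hDDdef
  set C : ℝ := ∑ i : Fin N, ∑ j : Fin N,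
    (∫ x, (-Real.log (p (Θ (Z i) (Z j)) x)) * p (Θ (Z i) (Z j)) x ∂ν)
      * ((1/(N:ℝ)) * (1/(N:ℝ))) with hCdef
  have hterm_nonneg : ∀ S : Matrix (Fin N) (Fin K) ℝ, S ∈ UK N K → ∀ i j k l,
      0 ≤ d (Θ (Z i) (Z j)) (Θ k l) * S i k * S j l := fun S hS i j k l =>
    mul_nonneg (mul_nonneg (hd_nonneg _ _) (hS.1 i k)) (hS.1 j l)
  have hDD_nonneg : ∀ S ∈ UK N K, 0 ≤ DD S := fun S hS =>
    Finset.sum_nonneg fun i _ => Finset.sum_nonneg fun j _ => Finset.sum_nonneg fun k _ =>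
      Finset.sum_nonneg fun l _ => hterm_nonneg S hS i j k l
  -- decomposition of the loss
  have decomp : ∀ S ∈ UK N K, calL S = DD S + C := by
    intro S hS
    rw [hcalL, hDDdef, hCdef, ← Finset.sum_add_distrib]
    refine Finset.sum_congr rfl fun i _ => ?_
    rw [← Finset.sum_add_distrib]
    refine Finset.sum_congr rfl fun j _ => ?_
    have step1 : ∑ k, ∑ l,
        (∫ x, (-Real.log (p (Θ k l) x)) * p (Θ (Z i) (Z j)) x ∂ν) * S i k * S j l
        = ∑ k, ∑ l, (d (Θ (Z i) (Z j)) (Θ k l) * S i k * S j l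
          + (∫ x, (-Real.log (p (Θ (Z i) (Z j)) x)) * p (Θ (Z i) (Z j)) x ∂ν)
              * (S i k * S j l)) := by
      refine Finset.sum_congr rfl fun k _ => Finset.sum_congr rfl fun l _ => ?_
      rw [key (Θ (Z i) (Z j)) (Θ k l)]; ring
    rw [step1]
    simp only [Finset.sum_add_distrib]
    congr 1
    have hfac : ∀ c : ℝ, ∑ k : Fin K, ∑ l : Fin K, c * (S i k * S j l)
        = c * ((∑ k, S i k) * (∑ l, S j l)) := by
      intro c
      rw [Finset.sum_mul_sum, Finset.mul_sum]
      exact Finset.sum_congr rfl fun k _ => by rw [Finset.mul_sum]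
    rw [hfac, hS.2 i, hS.2 j]
  -- indicator matrices belong to `UK` and make `DD` vanish
  have hmem : ∀ σ : Equiv.Perm (Fin K),
      (Matrix.of fun i k => if k = σ (Z i) then 1/(N:ℝ) else 0) ∈ UK N K := by
    intro σ
    constructor
    · intro i k; dsimp only [Matrix.of_apply]; split <;> positivity
    · intro i; simp [Finset.sum_ite_eq']
  have hform0 : ∀ σ : Equiv.Perm (Fin K), (∀ k l, Θ (σ k) (σ l) = Θ k l) →
      ∀ S : Matrix (Fin N) (Fin K) ℝ,
      (∀ i k, S i k = if k = σ (Z i) then 1/(N:ℝ) else 0) → DD S = 0 := by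
    intro σ hΘσ S hSform
    rw [hDDdef]
    refine Finset.sum_eq_zero fun i _ => Finset.sum_eq_zero fun j _ =>
      Finset.sum_eq_zero fun k _ => Finset.sum_eq_zero fun l _ => ?_
    rw [hSform i k, hSform j l]
    by_cases hk : k = σ (Z i)
    · by_cases hl : l = σ (Z j)
      · subst hk; subst hl
        rw [hΘσ (Z i) (Z j), (hd_eq _ _).mpr rfl]
        ring
      · simp [hl]
    · simp [hk]
  intro T hT
  constructor
  · -- minimizer → structure
    intro hmin
    have hT0mem := hmem (Equiv.refl (Fin K))
    have hle := hmin hT0mem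
    have hT0form : ∀ i k, (Matrix.of fun i k => if k = Equiv.refl (Fin K) (Z i)
        then 1/(N:ℝ) else 0) i k = if k = Equiv.refl (Fin K) (Z i) then 1/(N:ℝ) else 0 :=
      fun i k => rfl
    have hDD0 : DD T = 0 := by
      have h1 := decomp T hT
      have h2 := decomp _ hT0mem
      have h3 := hform0 (Equiv.refl (Fin K)) (fun k l => rfl) _ hT0form
      have h4 := hDD_nonneg T hT
      have hle' : calL T ≤ calL (Matrix.of fun i k =>
          if k = Equiv.refl (Fin K) (Z i) then 1/(N:ℝ) else 0) := hle
      rw [h1, h2, h3] at hle'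
      linarith
    -- each term vanishes
    have hterm0 : ∀ i j k l, d (Θ (Z i) (Z j)) (Θ k l) * T i k * T j l = 0 := by
      intro i j k l
      have h1 := (Finset.sum_eq_zero_iff_of_nonneg fun i _ =>
        Finset.sum_nonneg fun j _ => Finset.sum_nonneg fun k _ =>
          Finset.sum_nonneg fun l _ => hterm_nonneg T hT i j k l).mp hDD0 i (Finset.mem_univ i)
      have h2 := (Finset.sum_eq_zero_iff_of_nonneg fun j _ =>
        Finset.sum_nonneg fun k _ => Finset.sum_nonneg fun l _ =>
          hterm_nonneg T hT i j k l).mp h1 j (Finset.mem_univ j)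
      have h3 := (Finset.sum_eq_zero_iff_of_nonneg fun k _ =>
        Finset.sum_nonneg fun l _ => hterm_nonneg T hT i j k l).mp h2 k (Finset.mem_univ k)
      exact (Finset.sum_eq_zero_iff_of_nonneg fun l _ =>
        hterm_nonneg T hT i j k l).mp h3 l (Finset.mem_univ l)
    have hstar : ∀ i j k l, T i k ≠ 0 → T j l ≠ 0 → Θ k l = Θ (Z i) (Z j) := by
      intro i j k l hik hjl
      have h := hterm0 i j k l
      have hd0 : d (Θ (Z i) (Z j)) (Θ k l) = 0 := by
        rcases mul_eq_zero.mp h with h' | h'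
        · rcases mul_eq_zero.mp h' with h'' | h''
          · exact h''
          · exact absurd h'' hik
        · exact absurd h' hjl
      exact ((hd_eq _ _).mp hd0).symm
    -- each row has a nonzero entry
    have hrow : ∀ i, ∃ k, T i k ≠ 0 := by
      intro i
      by_contra h
      push_neg at h
      have := hT.2 i
      rw [Finset.sum_eq_zero fun k _ => h k] at this
      exact hNpos.ne' this.symm
    -- class representatives
    choose r hr using hZ
    choose σ0 hσ0 using fun a : Fin K => hrow (r a)
    -- separation: rows with a common nonzero column are in the same class
    have hsep : ∀ i i' k, T i k ≠ 0 → T i' k ≠ 0 → Z i = Z i' := by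
      intro i i' k hik hi'k
      by_contra hne
      obtain ⟨l, hl⟩ := hA1 (Z i) (Z i') hne
      have e1 : Θ (Z i) l = Θ (Z i') l := by
        have a1 := hstar i (r l) k (σ0 l) hik (hσ0 l)
        have a2 := hstar i' (r l) k (σ0 l) hi'k (hσ0 l)
        rw [hr l] at a1 a2
        rw [← a1, ← a2]
      have e2 : Θ l (Z i) = Θ l (Z i') := by
        have a1 := hstar (r l) i (σ0 l) k (hσ0 l) hik
        have a2 := hstar (r l) i' (σ0 l) k (hσ0 l) hi'k
        rw [hr l] at a1 a2
        rw [← a1, ← a2]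
      rcases hl with hl | hl
      · exact hl e1
      · exact hl e2
    have hinj : Function.Injective σ0 := by
      intro a b hab
      have := hsep (r a) (r b) (σ0 a) (hσ0 a) (hab ▸ hσ0 b)
      rwa [hr a, hr b] at this
    have hbij : Function.Bijective σ0 := Finite.injective_iff_bijective.mp hinj
    refine ⟨Equiv.ofBijective σ0 hbij, ?_, ?_⟩
    · intro k l
      have := hstar (r k) (r l) (σ0 k) (σ0 l) (hσ0 k) (hσ0 l)
      rw [hr k, hr l] at this
      simpa using this
    · have hTk : ∀ i k, T i k ≠ 0 → k = σ0 (Z i) := by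
        intro i k hk
        obtain ⟨b, hb⟩ := hbij.2 k
        have hz : Z i = b := by
          have hk' : T (r b) k ≠ 0 := by rw [← hb]; exact hσ0 b
          have := hsep i (r b) k hk hk'
          rwa [hr b] at this
        rw [← hb, hz]
      intro i k
      simp only [Equiv.ofBijective_apply]
      by_cases hk : k = σ0 (Z i)
      · rw [if_pos hk]
        subst hk
        have hsum := hT.2 i
        rw [Finset.sum_eq_single (σ0 (Z i))
          (fun m _ hm => by_contra fun h => hm (hTk i m h))
          (fun h => absurd (Finset.mem_univ _) h)] at hsum
        exact hsum
      · rw [if_neg hk]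
        by_contra h
        exact hk (hTk i k h)
  · -- structure → minimizer
    rintro ⟨σ, hΘσ, hTform⟩
    intro S hS
    have h1 := decomp T hT
    have h2 := decomp S hS
    have h3 := hform0 σ hΘσ T hTform
    have h4 := hDD_nonneg S hS
    simp only [Set.mem_setOf_eq] at *
    show calL T ≤ calL S
    rw [h1, h2, h3]
    linarith
end

section
/- Let A ∈ {0,1}^{N×N} be any symmetric binary matrix with zero diagonal and K ≥ 1. For the Bernoulli model p(a|θ) = θ^a (1−θ)^{1−a}, define the SBM likelihood p(A|Θ,α) := ∑_{z ∈ {1,…,K}^N} ∏_{i≠j} p(A_{ij}|Θ_{z_i z_j}) ∏_{i=1}^N α_{z_i}, and define srGW_p(A,Θ) := min over T ∈ 𝒰_K(1_N/N) of ∑_{i≠j} ∑_{k,l} (−log p(A_{ij}|Θ_{kl})) T_{ik} T_{jl}. Then sup over Θ ∈ (0,1)^{K×K} of | (1/N²) sup_{α ∈ Δ_K} log p(A|Θ,α) + srGW_p(A,Θ) | ≤ (log K)/N. -/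
/-!
Write `g z` for the complete-data log-likelihood of a block assignment `z : Fin N → Fin K` and
`G` for its maximum. The `α`-weights `∏ i, α (z i)` sum to one, so `log p(A|Θ,α) ≤ G`, while the
uniform `α` keeps the term of a maximiser with weight `K⁻ᴺ`, giving `G - N log K` from below.
The srGW objective only pairs distinct rows of `T`, so it is multilinear in the rows and equals
the expectation of `-g z / N²` when the `z i` are drawn independently from the rows of `N • T`.
Hence it is at least `-G / N²`, with equality at the deterministic plan of a maximiser.
-/

open Finset

/-- Bernoulli model `p(a|θ) = θ^a (1−θ)^{1−a}` (real exponents). -/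
noncomputable def pBer (a θ : ℝ) : ℝ := θ ^ a * (1 - θ) ^ (1 - a)

/-- SBM likelihood `p(A|Θ,α) = ∑_z ∏_{i≠j} p(A_{ij}|Θ_{z_i z_j}) ∏_i α_{z_i}`. -/
noncomputable def SBMlik {N K : ℕ} (A : Matrix (Fin N) (Fin N) ℝ)
    (Θ : Matrix (Fin K) (Fin K) ℝ) (α : Fin K → ℝ) : ℝ :=
  ∑ z : Fin N → Fin K,
    (∏ i, ∏ j, if i = j then 1 else pBer (A i j) (Θ (z i) (z j))) * ∏ i, α (z i)

/-- `srGW_p(A,Θ) = min_{T ∈ 𝒰_K(1_N/N)} ∑_{i≠j} ∑_{k,l} (−log p(A_{ij}|Θ_{kl})) T_{ik}T_{jl}`. -/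
noncomputable def srGWp {N K : ℕ} (A : Matrix (Fin N) (Fin N) ℝ)
    (Θ : Matrix (Fin K) (Fin K) ℝ) : ℝ :=
  ⨅ T : UK N K, ∑ i, ∑ j,
    if i = j then 0 else
      ∑ k, ∑ l, (-Real.log (pBer (A i j) (Θ k l))) * T.1 i k * T.1 j l

section ProductWeights

variable {ι κ R : Type*} [Fintype ι] [DecidableEq ι] [Fintype κ] [CommSemiring R]

lemma sum_prod_eq_one_of_sum_eq_one (S : ι → κ → R) (hS : ∀ m, ∑ c, S m c = 1) :
    ∑ z : ι → κ, ∏ m, S m (z m) = 1 := by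
  simp [← Fintype.prod_sum, hS]

lemma sum_prod_mul_ite_mul_ite [DecidableEq κ] (S : ι → κ → R) (hS : ∀ m, ∑ c, S m c = 1)
    {i j : ι} (hij : i ≠ j) (k l : κ) :
    ∑ z : ι → κ, (∏ m, S m (z m)) * ((if z i = k then 1 else 0) * (if z j = l then 1 else 0))
      = S i k * S j l := by
  set φ : ι → κ → R := fun m c =>
    if m = i then (if c = k then 1 else 0) else if m = j then (if c = l then 1 else 0) else 1
  have hφ : ∀ z : ι → κ,
      (if z i = k then (1 : R) else 0) * (if z j = l then 1 else 0) = ∏ m, φ m (z m) := by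
    intro z
    rw [Fintype.prod_eq_mul i j hij fun m hm => by simp [φ, hm.1, hm.2]]
    simp [φ, hij.symm]
  calc _ = ∑ z : ι → κ, ∏ m, S m (z m) * φ m (z m) := by
        simp only [hφ, ← Finset.prod_mul_distrib]
    _ = ∏ m, ∑ c, S m c * φ m c := (Fintype.prod_sum fun m c => S m c * φ m c).symm
    _ = S i k * S j l := by
        rw [Fintype.prod_eq_mul i j hij fun m hm => by
          simp only [φ, if_neg hm.1, if_neg hm.2, mul_one, hS]]
        simp [φ, hij.symm]

lemma sum_prod_mul_apply_apply [DecidableEq κ] (S : ι → κ → R) (hS : ∀ m, ∑ c, S m c = 1)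
    {i j : ι} (hij : i ≠ j) (C : κ → κ → R) :
    ∑ z : ι → κ, (∏ m, S m (z m)) * C (z i) (z j) = ∑ k, ∑ l, C k l * S i k * S j l := by
  have hC : ∀ z : ι → κ, C (z i) (z j)
      = ∑ k, ∑ l, C k l * ((if z i = k then 1 else 0) * (if z j = l then 1 else 0)) := by
    intro z
    simp [mul_ite, Finset.sum_ite_eq]
  simp_rw [hC, Finset.mul_sum, mul_left_comm _ (C _ _)]
  rw [Finset.sum_comm]
  refine Finset.sum_congr rfl fun k _ => ?_
  rw [Finset.sum_comm]
  simp_rw [← Finset.mul_sum, sum_prod_mul_ite_mul_ite S hS hij, mul_assoc]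

lemma sum_offDiag_bilinear_eq_sum_prod [DecidableEq κ] (S : ι → κ → R)
    (hS : ∀ m, ∑ c, S m c = 1) (C : ι → ι → κ → κ → R) :
    ∑ i, ∑ j, (if i = j then 0 else ∑ k, ∑ l, C i j k l * S i k * S j l)
      = ∑ z : ι → κ, (∏ m, S m (z m)) * ∑ i, ∑ j, if i = j then 0 else C i j (z i) (z j) := by
  simp_rw [Finset.mul_sum, mul_ite, mul_zero]
  symm
  rw [Finset.sum_comm]
  refine Finset.sum_congr rfl fun i _ => ?_
  rw [Finset.sum_comm]
  refine Finset.sum_congr rfl fun j _ => ?_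
  split_ifs with hij
  · simp
  · exact sum_prod_mul_apply_apply S hS hij (C i j)

end ProductWeights

lemma pBer_pos {a θ : ℝ} (h : θ ∈ Set.Ioo (0 : ℝ) 1) : 0 < pBer a θ :=
  mul_pos (Real.rpow_pos_of_pos h.1 _) (Real.rpow_pos_of_pos (sub_pos.mpr h.2) _)

section SBM

variable {N K : ℕ} (A : Matrix (Fin N) (Fin N) ℝ) (Θ : Matrix (Fin K) (Fin K) ℝ)

noncomputable def assignLogLik (z : Fin N → Fin K) : ℝ :=
  ∑ i, ∑ j, if i = j then 0 else Real.log (pBer (A i j) (Θ (z i) (z j)))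

noncomputable def srGWcost (T : Matrix (Fin N) (Fin K) ℝ) : ℝ :=
  ∑ i, ∑ j, if i = j then 0 else ∑ k, ∑ l, (-Real.log (pBer (A i j) (Θ k l))) * T i k * T j l

noncomputable def assignPlan (z : Fin N → Fin K) : Matrix (Fin N) (Fin K) ℝ :=
  Matrix.of fun i k => if z i = k then 1 / (N : ℝ) else 0

variable {A Θ}

lemma SBMlik_eq_sum_exp (hΘ : ∀ k l, Θ k l ∈ Set.Ioo (0 : ℝ) 1) (α : Fin K → ℝ) :
    SBMlik A Θ α = ∑ z, Real.exp (assignLogLik A Θ z) * ∏ i, α (z i) := by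
  refine Finset.sum_congr rfl fun z _ => ?_
  simp only [assignLogLik, Real.exp_sum, apply_ite Real.exp, Real.exp_zero,
    Real.exp_log (pBer_pos (hΘ _ _))]

lemma exp_assignLogLik_mul_le_SBMlik (hΘ : ∀ k l, Θ k l ∈ Set.Ioo (0 : ℝ) 1)
    {α : Fin K → ℝ} (hα : ∀ k, 0 ≤ α k) (z : Fin N → Fin K) :
    Real.exp (assignLogLik A Θ z) * ∏ i, α (z i) ≤ SBMlik A Θ α := by
  rw [SBMlik_eq_sum_exp hΘ]
  exact Finset.single_le_sum (f := fun z => Real.exp (assignLogLik A Θ z) * ∏ i, α (z i))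
    (fun z _ => mul_nonneg (Real.exp_pos _).le (Finset.prod_nonneg fun i _ => hα _))
    (Finset.mem_univ z)

lemma log_SBMlik_le (hΘ : ∀ k l, Θ k l ∈ Set.Ioo (0 : ℝ) 1) {α : Fin K → ℝ}
    (hα0 : ∀ k, 0 ≤ α k) (hα1 : ∑ k, α k = 1) {M : ℝ} (hM : ∀ z, assignLogLik A Θ z ≤ M) :
    Real.log (SBMlik A Θ α) ≤ M := by
  obtain ⟨k, -, hk⟩ := Finset.exists_lt_of_sum_lt (s := Finset.univ)
    (f := fun _ => (0 : ℝ)) (g := α) (by simp [hα1])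
  have hpos : 0 < SBMlik A Θ α :=
    lt_of_lt_of_le (by positivity) (exp_assignLogLik_mul_le_SBMlik hΘ hα0 fun _ : Fin N => k)
  refine (Real.log_le_iff_le_exp hpos).2 ?_
  calc SBMlik A Θ α = ∑ z, Real.exp (assignLogLik A Θ z) * ∏ i, α (z i) := SBMlik_eq_sum_exp hΘ α
    _ ≤ ∑ z : Fin N → Fin K, Real.exp M * ∏ i, α (z i) := by
        gcongr with z
        · exact Finset.prod_nonneg fun i _ => hα0 _
        · exact hM z
    _ = Real.exp M := by
        rw [← Finset.mul_sum, sum_prod_eq_one_of_sum_eq_one (fun _ => α) fun _ => hα1, mul_one]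

lemma assignLogLik_sub_le_log_SBMlik_uniform (hΘ : ∀ k l, Θ k l ∈ Set.Ioo (0 : ℝ) 1)
    (hK : 1 ≤ K) (z : Fin N → Fin K) :
    assignLogLik A Θ z - N * Real.log K ≤ Real.log (SBMlik A Θ fun _ => (K : ℝ)⁻¹) := by
  have hKpos : (0 : ℝ) < K := by exact_mod_cast hK
  have h := exp_assignLogLik_mul_le_SBMlik (A := A) (α := fun _ => (K : ℝ)⁻¹) hΘ
    (fun _ => by positivity) z
  have := Real.log_le_log (by positivity) h
  rw [Real.log_mul (Real.exp_pos _).ne' (by positivity), Real.log_exp, Finset.prod_const,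
    Finset.card_univ, Fintype.card_fin, Real.log_pow, Real.log_inv] at this
  linarith

lemma iSup_log_SBMlik_mem_Icc (hΘ : ∀ k l, Θ k l ∈ Set.Ioo (0 : ℝ) 1) (hK : 1 ≤ K)
    {z₀ : Fin N → Fin K} (hz₀ : ∀ z, assignLogLik A Θ z ≤ assignLogLik A Θ z₀) :
    (⨆ α : {α : Fin K → ℝ // (∀ k, 0 ≤ α k) ∧ ∑ k, α k = 1}, Real.log (SBMlik A Θ α.1)) ∈
      Set.Icc (assignLogLik A Θ z₀ - N * Real.log K) (assignLogLik A Θ z₀) := by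
  have hKpos : (0 : ℝ) < K := by exact_mod_cast hK
  let uniform : {α : Fin K → ℝ // (∀ k, 0 ≤ α k) ∧ ∑ k, α k = 1} :=
    ⟨fun _ => (K : ℝ)⁻¹, fun _ => by positivity, by simp [hKpos.ne']⟩
  have hle : ∀ α : {α : Fin K → ℝ // (∀ k, 0 ≤ α k) ∧ ∑ k, α k = 1},
      Real.log (SBMlik A Θ α.1) ≤ assignLogLik A Θ z₀ :=
    fun α => log_SBMlik_le hΘ α.2.1 α.2.2 hz₀
  refine ⟨le_ciSup_of_le ⟨_, Set.forall_mem_range.2 hle⟩ uniform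
    (assignLogLik_sub_le_log_SBMlik_uniform hΘ hK z₀), ?_⟩
  have : Nonempty _ := ⟨uniform⟩
  exact ciSup_le hle

lemma srGWcost_smul (c : ℝ) (T : Matrix (Fin N) (Fin K) ℝ) :
    srGWcost A Θ (c • T) = c ^ 2 * srGWcost A Θ T := by
  simp only [srGWcost, Matrix.smul_apply, smul_eq_mul, Finset.mul_sum, mul_ite, mul_zero]
  refine Finset.sum_congr rfl fun i _ => Finset.sum_congr rfl fun j _ => ?_
  split_ifs
  · rfl
  · exact Finset.sum_congr rfl fun k _ => Finset.sum_congr rfl fun l _ => by ring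

lemma srGWcost_eq_sum_prod {S : Matrix (Fin N) (Fin K) ℝ} (hS : ∀ m, ∑ c, S m c = 1) :
    srGWcost A Θ S = ∑ z, (∏ m, S m (z m)) * -assignLogLik A Θ z := by
  rw [srGWcost, sum_offDiag_bilinear_eq_sum_prod S hS]
  refine Finset.sum_congr rfl fun z _ => ?_
  simp only [assignLogLik, ← Finset.sum_neg_distrib, neg_ite, neg_zero]

lemma neg_le_srGWcost {S : Matrix (Fin N) (Fin K) ℝ} (hS0 : ∀ m c, 0 ≤ S m c)
    (hS : ∀ m, ∑ c, S m c = 1) {M : ℝ} (hM : ∀ z, assignLogLik A Θ z ≤ M) :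
    -M ≤ srGWcost A Θ S := by
  rw [srGWcost_eq_sum_prod hS]
  calc -M = ∑ z : Fin N → Fin K, (∏ m, S m (z m)) * -M := by
        rw [← Finset.sum_mul, sum_prod_eq_one_of_sum_eq_one S hS, one_mul]
    _ ≤ _ := by
        gcongr with z
        · exact Finset.prod_nonneg fun m _ => hS0 m _
        · exact hM z

lemma neg_div_le_srGWcost (hN : 0 < N) {T : Matrix (Fin N) (Fin K) ℝ} (hT : T ∈ UK N K)
    {M : ℝ} (hM : ∀ z, assignLogLik A Θ z ≤ M) :
    -M / N ^ 2 ≤ srGWcost A Θ T := by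
  have hNpos : (0 : ℝ) < N := by exact_mod_cast hN
  have hT' : T = (N : ℝ)⁻¹ • ((N : ℝ) • T) := by
    rw [smul_smul, inv_mul_cancel₀ hNpos.ne', one_smul]
  have hS : ∀ m, ∑ c, ((N : ℝ) • T) m c = 1 := fun m => by
    simp [← Finset.mul_sum, hT.2 m, hNpos.ne']
  rw [hT', srGWcost_smul, inv_pow, inv_mul_eq_div]
  gcongr
  exact neg_le_srGWcost (fun m c => mul_nonneg hNpos.le (hT.1 m c)) hS hM

lemma assignPlan_mem (z : Fin N → Fin K) : assignPlan z ∈ UK N K :=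
  ⟨fun i k => by simp only [assignPlan, Matrix.of_apply]; split_ifs <;> positivity,
    fun i => by simp [assignPlan]⟩

lemma srGWcost_assignPlan (z : Fin N → Fin K) :
    srGWcost A Θ (assignPlan z) = -assignLogLik A Θ z / N ^ 2 := by
  simp only [srGWcost, assignPlan, Matrix.of_apply, mul_ite, mul_zero, ite_mul, zero_mul,
    Finset.sum_ite_eq, Finset.mem_univ, if_true, assignLogLik, ← Finset.sum_neg_distrib,
    Finset.sum_div]
  refine Finset.sum_congr rfl fun i _ => Finset.sum_congr rfl fun j _ => ?_
  split_ifs <;> ring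

lemma srGWp_eq (hN : 0 < N) {z₀ : Fin N → Fin K}
    (hz₀ : ∀ z, assignLogLik A Θ z ≤ assignLogLik A Θ z₀) :
    srGWp A Θ = -assignLogLik A Θ z₀ / N ^ 2 := by
  have hlow : ∀ T : UK N K, -assignLogLik A Θ z₀ / N ^ 2 ≤ srGWcost A Θ T.1 :=
    fun T => neg_div_le_srGWcost hN T.2 hz₀
  have : Nonempty (UK N K) := ⟨⟨_, assignPlan_mem z₀⟩⟩
  exact le_antisymm ((ciInf_le ⟨_, Set.forall_mem_range.2 hlow⟩ ⟨_, assignPlan_mem z₀⟩).trans_eq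
    (srGWcost_assignPlan z₀)) (le_ciInf hlow)

end SBM

theorem stmt5_general (N K : ℕ) (hN : 0 < N) (hK : 1 ≤ K)
    (A : Matrix (Fin N) (Fin N) ℝ) :
    ∀ Θ : Matrix (Fin K) (Fin K) ℝ, (∀ k l, Θ k l ∈ Set.Ioo (0 : ℝ) 1) →
      |(1 / (N : ℝ) ^ 2) *
          (⨆ α : {α : Fin K → ℝ // (∀ k, 0 ≤ α k) ∧ ∑ k, α k = 1},
            Real.log (SBMlik A Θ α.1)) +
        srGWp A Θ| ≤ Real.log K / N := by
  intro Θ hΘ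
  have : Nonempty (Fin K) := ⟨⟨0, hK⟩⟩
  obtain ⟨z₀, hz₀⟩ := Finite.exists_max (assignLogLik A Θ)
  obtain ⟨hlow, hup⟩ := iSup_log_SBMlik_mem_Icc hΘ hK hz₀
  have hNpos : (0 : ℝ) < N := by exact_mod_cast hN
  have hlogK : 0 ≤ Real.log K := Real.log_nonneg (by exact_mod_cast hK)
  rw [srGWp_eq hN hz₀, show ∀ L G : ℝ, 1 / (N : ℝ) ^ 2 * L + -G / N ^ 2 = (L - G) / N / N by
      intro L G; ring, abs_div, abs_div, abs_of_pos hNpos, div_le_div_iff_of_pos_right hNpos,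
    div_le_iff₀ hNpos, abs_le]
  constructor <;> nlinarith

/-- `sup_Θ | (1/N²) sup_{α ∈ Δ_K} log p(A|Θ,α) + srGW_p(A,Θ) | ≤ (log K)/N`. -/
theorem stmt5 (N K : ℕ) (hN : 0 < N) (hK : 1 ≤ K)
    (A : Matrix (Fin N) (Fin N) ℝ)
    (hAsymm : ∀ i j, A i j = A j i)
    (hAdiag : ∀ i, A i i = 0)
    (hA01 : ∀ i j, A i j = 0 ∨ A i j = 1) :
    ∀ Θ : Matrix (Fin K) (Fin K) ℝ, (∀ k l, Θ k l ∈ Set.Ioo (0 : ℝ) 1) →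
      |(1 / (N : ℝ) ^ 2) *
          (⨆ α : {α : Fin K → ℝ // (∀ k, 0 ≤ α k) ∧ ∑ k, α k = 1},
            Real.log (SBMlik A Θ α.1)) +
        srGWp A Θ| ≤ Real.log K / N :=
  stmt5_general N K hN hK A
end

section
/- Let A ∈ {0,1}^{N×N} be any symmetric binary matrix with zero diagonal and K ≥ 1. For the Bernoulli model p(a|θ) = θ^a (1−θ)^{1−a}, define the SBM likelihood p(A|Θ,α) := ∑_{z ∈ {1,…,K}^N} ∏_{i≠j} p(A_{ij}|Θ_{z_i z_j}) ∏_{i=1}^N α_{z_i}, and define srGW_p(A,Θ) := min over T ∈ 𝒰_K(1_N/N) of ∑_{i≠j} ∑_{k,l} (−log p(A_{ij}|Θ_{kl})) T_{ik} T_{jl}. Then for every Θ ∈ (0,1)^{K×K} and every α ∈ Δ_K: log p(A|Θ,α) ≤ −N² · srGW_p(A,Θ). -/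
open Finset

set_option maxHeartbeats 1000000

lemma pBer_mem {a θ : ℝ} (ha : a = 0 ∨ a = 1) (hθ : θ ∈ Set.Ioo (0 : ℝ) 1) :
    pBer a θ ∈ Set.Ioo (0 : ℝ) 1 := by
  obtain ⟨h0, h1⟩ := hθ
  rcases ha with h | h <;> subst h <;>
    simp [pBer, Real.rpow_zero, Real.rpow_one] <;>
    constructor <;> linarith

/-- `log p(A|Θ,α) ≤ −N² · srGW_p(A,Θ)` for every `Θ ∈ (0,1)^{K×K}` and every `α ∈ Δ_K`. -/
theorem stmt7 (N K : ℕ) (hN : 0 < N) (hK : 1 ≤ K)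
    (A : Matrix (Fin N) (Fin N) ℝ)
    (hAsymm : ∀ i j, A i j = A j i)
    (hAdiag : ∀ i, A i i = 0)
    (hA01 : ∀ i j, A i j = 0 ∨ A i j = 1) :
    ∀ Θ : Matrix (Fin K) (Fin K) ℝ, (∀ k l, Θ k l ∈ Set.Ioo (0 : ℝ) 1) →
      ∀ α : Fin K → ℝ, (∀ k, 0 ≤ α k) → ∑ k, α k = 1 →
        Real.log (SBMlik A Θ α) ≤ -(N : ℝ) ^ 2 * srGWp A Θ := by
  intro Θ hΘ α hα hα1
  have hNpos : (0 : ℝ) < N := by exact_mod_cast hN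
  have hp : ∀ i j k l, pBer (A i j) (Θ k l) ∈ Set.Ioo (0 : ℝ) 1 :=
    fun i j k l => pBer_mem (hA01 i j) (hΘ k l)
  have hlog : ∀ i j k l, 0 ≤ -Real.log (pBer (A i j) (Θ k l)) := by
    intro i j k l
    have := Real.log_nonpos (le_of_lt (hp i j k l).1) (le_of_lt (hp i j k l).2)
    linarith
  set g : Matrix (Fin N) (Fin K) ℝ → ℝ := fun T => ∑ i, ∑ j,
    if i = j then 0 else
      ∑ k, ∑ l, (-Real.log (pBer (A i j) (Θ k l))) * T i k * T j l with hg
  set L : (Fin N → Fin K) → ℝ :=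
    fun z => ∏ i, ∏ j, if i = j then 1 else pBer (A i j) (Θ (z i) (z j)) with hL
  set w : (Fin N → Fin K) → ℝ := fun z => ∏ i, α (z i) with hw
  have hSdef : SBMlik A Θ α = ∑ z : Fin N → Fin K, L z * w z := rfl
  have hbdd : BddBelow (Set.range fun T : UK N K => g T.1) := by
    refine ⟨0, ?_⟩
    rintro x ⟨⟨T, hTn, hTs⟩, rfl⟩
    apply Finset.sum_nonneg; intro i _
    apply Finset.sum_nonneg; intro j _
    by_cases h : i = j
    · simp [h]
    · simp only [h, if_false]
      apply Finset.sum_nonneg; intro k _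
      apply Finset.sum_nonneg; intro l _
      exact mul_nonneg (mul_nonneg (hlog i j k l) (hTn i k)) (hTn j l)
  -- key estimate for each labeling z
  have key : ∀ z : Fin N → Fin K, Real.log (L z) ≤ -(N : ℝ) ^ 2 * srGWp A Θ := by
    intro z
    set Tz : Matrix (Fin N) (Fin K) ℝ := fun i k => if z i = k then 1 / (N : ℝ) else 0 with hTz
    have hTzU : Tz ∈ UK N K := by
      constructor
      · intro i k
        by_cases h : z i = k <;> simp [hTz, h] <;> positivity
      · intro i
        simp [hTz, Finset.sum_ite_eq]
    have hle : srGWp A Θ ≤ g Tz := ciInf_le hbdd ⟨Tz, hTzU⟩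
    have hgTz : g Tz = (1 / (N : ℝ))^2 * ∑ i, ∑ j,
        if i = j then 0 else -Real.log (pBer (A i j) (Θ (z i) (z j))) := by
      rw [hg, Finset.mul_sum]
      refine Finset.sum_congr rfl fun i _ => ?_
      rw [Finset.mul_sum]
      refine Finset.sum_congr rfl fun j _ => ?_
      by_cases h : i = j
      · simp [h]
      · simp only [h, if_false, hTz]
        rw [Finset.sum_eq_single (z i)]
        · rw [Finset.sum_eq_single (z j)]
          · simp; ring
          · intro l _ hl; simp [Ne.symm hl]
          · intro h; exact absurd (Finset.mem_univ _) h
        · intro k _ hk; simp [Ne.symm hk]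
        · intro h; exact absurd (Finset.mem_univ _) h
    have hlogprod : Real.log (L z)
        = ∑ i, ∑ j, if i = j then 0 else Real.log (pBer (A i j) (Θ (z i) (z j))) := by
      rw [hL, Real.log_prod]
      · refine Finset.sum_congr rfl fun i _ => ?_
        rw [Real.log_prod]
        · refine Finset.sum_congr rfl fun j _ => ?_
          by_cases h : i = j <;> simp [h]
        · intro j _
          by_cases h : i = j
          · simp [h]
          · simp only [h, if_false]; exact ne_of_gt (hp i j (z i) (z j)).1
      · intro i _
        apply ne_of_gt
        apply Finset.prod_pos
        intro j _
        by_cases h : i = j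
        · simp [h]
        · simp only [h, if_false]; exact (hp i j (z i) (z j)).1
    have hflip : (∑ i, ∑ j, if i = j then 0 else -Real.log (pBer (A i j) (Θ (z i) (z j))))
        = -∑ i, ∑ j, if i = j then 0 else Real.log (pBer (A i j) (Θ (z i) (z j))) := by
      rw [← Finset.sum_neg_distrib]
      refine Finset.sum_congr rfl fun i _ => ?_
      rw [← Finset.sum_neg_distrib]
      refine Finset.sum_congr rfl fun j _ => ?_
      by_cases h : i = j <;> simp [h]
    have h1 : -(N : ℝ)^2 * g Tz
        = ∑ i, ∑ j, if i = j then 0 else Real.log (pBer (A i j) (Θ (z i) (z j))) := by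
      rw [hgTz, hflip, ← mul_assoc]
      have hN2 : -(N : ℝ)^2 * (1 / (N : ℝ))^2 = -1 := by
        field_simp
      rw [hN2]; ring
    rw [hlogprod, ← h1]
    exact mul_le_mul_of_nonpos_left hle (neg_nonpos.mpr (sq_nonneg _))
  have hLpos : ∀ z : Fin N → Fin K, 0 < L z := by
    intro z
    apply Finset.prod_pos; intro i _
    apply Finset.prod_pos; intro j _
    by_cases h : i = j
    · simp [h]
    · simp only [h, if_false]; exact (hp i j (z i) (z j)).1
  have hwnn : ∀ z : Fin N → Fin K, 0 ≤ w z :=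
    fun z => Finset.prod_nonneg fun i _ => hα (z i)
  have hwsum : ∑ z : Fin N → Fin K, w z = 1 := by
    rw [hw, ← Fintype.prod_sum (fun _ k => α k)]
    simp [hα1]
  have hSle : SBMlik A Θ α ≤ Real.exp (-(N : ℝ) ^ 2 * srGWp A Θ) := by
    rw [hSdef]
    calc ∑ z : Fin N → Fin K, L z * w z
        ≤ ∑ z : Fin N → Fin K, Real.exp (-(N : ℝ) ^ 2 * srGWp A Θ) * w z := by
          apply Finset.sum_le_sum
          intro z _
          apply mul_le_mul_of_nonneg_right _ (hwnn z)
          calc L z = Real.exp (Real.log (L z)) := (Real.exp_log (hLpos z)).symm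
            _ ≤ Real.exp (-(N : ℝ) ^ 2 * srGWp A Θ) := Real.exp_le_exp.mpr (key z)
      _ = Real.exp (-(N : ℝ) ^ 2 * srGWp A Θ) := by
          rw [← Finset.mul_sum, hwsum, mul_one]
  have hSpos : 0 < SBMlik A Θ α := by
    have hex : ∃ z : Fin N → Fin K, 0 < w z := by
      by_contra h
      push_neg at h
      have : ∑ z : Fin N → Fin K, w z ≤ 0 := Finset.sum_nonpos fun z _ => h z
      rw [hwsum] at this; linarith
    obtain ⟨z0, hz0⟩ := hex
    have hterm : 0 < L z0 * w z0 := mul_pos (hLpos z0) hz0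
    have hle0 : L z0 * w z0 ≤ ∑ z : Fin N → Fin K, L z * w z :=
      Finset.single_le_sum (fun z _ => mul_nonneg (le_of_lt (hLpos z)) (hwnn z))
        (Finset.mem_univ z0)
    rw [hSdef]; linarith
  calc Real.log (SBMlik A Θ α)
      ≤ Real.log (Real.exp (-(N : ℝ) ^ 2 * srGWp A Θ)) := Real.log_le_log hSpos hSle
    _ = -(N : ℝ) ^ 2 * srGWp A Θ := Real.log_exp _
end

section
/- Let A ∈ {0,1}^{N×N} be symmetric with zero diagonal, Θ ∈ (0,1)^{K×K}, and p(a|θ) = θ^a(1−θ)^{1−a}. For τ ∈ ℝ₊^{N×K} with ∑_k τ_{ik} = 1 for every i, define the mean-field ELBO 𝓛(τ,Θ,α) := (1/2)∑_{i≠j}∑_{k,l} τ_{ik} τ_{jl} log p(A_{ij}|Θ_{kl}) − ∑_{i,k} τ_{ik} log τ_{ik} + ∑_k (∑_i τ_{ik}) log α_k. Set α̂_k := N^{-1} ∑_i τ_{ik} and T := τ/N ∈ 𝒰_K(1_N/N). Then, with the conventions 0·log 0 = 0 and log p(A_{ii}|Θ_{kl}) = 0, one has 𝓛(τ,Θ,α̂)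 = (N²/2)·[ ∑_{i,j,k,l} log p(A_{ij}|Θ_{kl}) T_{ik} T_{jl} + (2/N)( H(T) − H(T^⊤ 1_N) ) ] − N log N, where H(T) := −∑_{i,k} T_{ik} log T_{ik} and H(T^⊤1_N) := −∑_k (∑_i T_{ik}) log(∑_i T_{ik}). Consequently, maximizing the ELBO over (τ,Θ) with α = α̂ is equivalent to minimizing ( −∑_{i,j,k,l} log p(A_{ij}|Θ_{kl}) T_{ik}T_{jl} − (2/N)[H(T) − H(T^⊤1_N)] ) over T ∈ 𝒰_K(1_N/N) and Θ. -/
open Finset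

/-- `log p(A_{ij}|Θ_{kl})` with the convention `log p(A_{ii}|Θ_{kl}) = 0`. -/
noncomputable def logpConv {N K : ℕ} (A : Matrix (Fin N) (Fin N) ℝ)
    (Θ : Matrix (Fin K) (Fin K) ℝ) (i j : Fin N) (k l : Fin K) : ℝ :=
  if i = j then 0 else Real.log (pBer (A i j) (Θ k l))

/-- Mean-field ELBO `𝓛(τ,Θ,α)` (the `i ≠ j` restriction is encoded in `logpConv`,
and Lean's convention `log 0 = 0` realizes `0 · log 0 = 0`). -/
noncomputable def ELBO {N K : ℕ} (A : Matrix (Fin N) (Fin N) ℝ)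
    (Θ : Matrix (Fin K) (Fin K) ℝ) (τ : Fin N → Fin K → ℝ) (α : Fin K → ℝ) : ℝ :=
  (1 / 2) * ∑ i, ∑ j, ∑ k, ∑ l, τ i k * τ j l * logpConv A Θ i j k l
    - ∑ i, ∑ k, τ i k * Real.log (τ i k)
    + ∑ k, (∑ i, τ i k) * Real.log (α k)

/-- Entropy `H(T) = −∑_{i,k} T_{ik} log T_{ik}`. -/
noncomputable def Hent {N K : ℕ} (T : Fin N → Fin K → ℝ) : ℝ :=
  -∑ i, ∑ k, T i k * Real.log (T i k)

/-- Entropy of the second marginal, `H(T^⊤ 1_N) = −∑_k (∑_i T_{ik}) log (∑_i T_{ik})`. -/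
noncomputable def HentCol {N K : ℕ} (T : Fin N → Fin K → ℝ) : ℝ :=
  -∑ k, (∑ i, T i k) * Real.log (∑ i, T i k)

/-- The (to-be-minimized) entropic srGW objective
`−∑ log p(A_{ij}|Θ_{kl}) T_{ik}T_{jl} − (2/N)[H(T) − H(T^⊤1_N)]`. -/
noncomputable def Jobj {N K : ℕ} (A : Matrix (Fin N) (Fin N) ℝ)
    (Θ : Matrix (Fin K) (Fin K) ℝ) (T : Fin N → Fin K → ℝ) : ℝ :=
  -∑ i, ∑ j, ∑ k, ∑ l, logpConv A Θ i j k l * T i k * T j l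
    - (2 / (N : ℝ)) * (Hent T - HentCol T)

/-!
With `α̂ = τᵀ1/N`, the prior term of the ELBO is `∑ₖ sₖ log sₖ − N log N = −H(τᵀ1) − N log N`,
since the column sums `sₖ` of `τ` add up to `N`. Dividing `τ` by `N` shifts `H(τ)` and `H(τᵀ1)` by
the same amount (`τ` and its column-sum vector have the same total mass), so `H(T) − H(Tᵀ1) = (H(τ) − H(τᵀ1))/N`,
while the quadratic term picks up a factor `1/N²`. Hence `𝓛(τ,Θ,α̂) = −(N²/2) J(T,Θ) − N log N`,
a decreasing affine function of the objective `J`.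
-/

open Real

lemma div_mul_log_div (x c : ℝ) : x / c * log (x / c) = (x * log x - x * log c) / c := by
  have h := negMulLog_mul x c⁻¹
  simp only [negMulLog, log_inv] at h
  rw [div_eq_mul_inv, div_eq_mul_inv]
  linear_combination -h

lemma mul_log_div (x : ℝ) {c : ℝ} (hc : c ≠ 0) : x * log (x / c) = x * log x - x * log c := by
  rcases eq_or_ne x 0 with rfl | hx
  · simp
  · rw [log_div hx hc, mul_sub]

section Rescaling

variable {N K : ℕ} (τ : Fin N → Fin K → ℝ) (c : ℝ)

lemma Hent_div : Hent (fun i k => τ i k / c) = (Hent τ + (∑ i, ∑ k, τ i k) * log c) / c := by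
  simp only [Hent, div_mul_log_div, ← Finset.sum_div, Finset.sum_sub_distrib, ← Finset.sum_mul]
  ring

lemma HentCol_div :
    HentCol (fun i k => τ i k / c) = (HentCol τ + (∑ i, ∑ k, τ i k) * log c) / c := by
  simp only [HentCol, ← Finset.sum_div, div_mul_log_div, Finset.sum_sub_distrib, ← Finset.sum_mul]
  rw [Finset.sum_comm (f := fun i k => τ i k)]
  ring

lemma Hent_div_sub_HentCol_div :
    Hent (fun i k => τ i k / c) - HentCol (fun i k => τ i k / c) = (Hent τ - HentCol τ) / c := by
  rw [Hent_div, HentCol_div]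
  ring

lemma sum_logpConv_mul_div_mul_div (A : Matrix (Fin N) (Fin N) ℝ) (Θ : Matrix (Fin K) (Fin K) ℝ) :
    ∑ i, ∑ j, ∑ k, ∑ l, logpConv A Θ i j k l * (τ i k / c) * (τ j l / c) =
      (∑ i, ∑ j, ∑ k, ∑ l, τ i k * τ j l * logpConv A Θ i j k l) / c ^ 2 := by
  simp only [Finset.sum_div]
  congr! 4 with i _ j _ k _ l _
  ring

end Rescaling

lemma ELBO_colMean_eq {N K : ℕ} (A : Matrix (Fin N) (Fin N) ℝ) (Θ : Matrix (Fin K) (Fin K) ℝ)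
    (τ : Fin N → Fin K → ℝ) {c : ℝ} (hc : c ≠ 0) :
    ELBO A Θ τ (fun k => (∑ i, τ i k) / c) =
      (1 / 2) * ∑ i, ∑ j, ∑ k, ∑ l, τ i k * τ j l * logpConv A Θ i j k l
        + (Hent τ - HentCol τ) - (∑ i, ∑ k, τ i k) * log c := by
  simp only [ELBO, Hent, HentCol, mul_log_div _ hc, Finset.sum_sub_distrib, ← Finset.sum_mul]
  rw [Finset.sum_comm (f := fun i k => τ i k)]
  ring

lemma ELBO_colMean_eq_neg_Jobj {N K : ℕ} (hN : 0 < N) (A : Matrix (Fin N) (Fin N) ℝ)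
    (Θ : Matrix (Fin K) (Fin K) ℝ) (τ : Fin N → Fin K → ℝ) (hsum : ∀ i, ∑ k, τ i k = 1) :
    ELBO A Θ τ (fun k => (∑ i, τ i k) / N) =
      -((N : ℝ) ^ 2 / 2 * Jobj A Θ (fun i k => τ i k / N)) - N * log N := by
  have hN' : (N : ℝ) ≠ 0 := by positivity
  have hmass : ∑ i, ∑ k, τ i k = N := by simp [hsum]
  rw [ELBO_colMean_eq A Θ τ hN', Jobj, sum_logpConv_mul_div_mul_div, Hent_div_sub_HentCol_div,
    hmass]
  field_simp
  ring

theorem stmt9_general (N K : ℕ) (hN : 0 < N)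
    (A : Matrix (Fin N) (Fin N) ℝ) :
    (∀ Θ : Matrix (Fin K) (Fin K) ℝ, (∀ k l, Θ k l ∈ Set.Ioo (0 : ℝ) 1) →
      ∀ τ : Fin N → Fin K → ℝ, (∀ i k, 0 ≤ τ i k) → (∀ i, ∑ k, τ i k = 1) →
        ELBO A Θ τ (fun k => (∑ i, τ i k) / N) =
          ((N : ℝ) ^ 2 / 2) *
              (∑ i, ∑ j, ∑ k, ∑ l,
                  logpConv A Θ i j k l * (τ i k / N) * (τ j l / N)
                + (2 / (N : ℝ)) *
                  (Hent (fun i k => τ i k / N) - HentCol (fun i k => τ i k / N)))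
            - (N : ℝ) * Real.log N) ∧
    (∀ Θ Θ' : Matrix (Fin K) (Fin K) ℝ,
      (∀ k l, Θ k l ∈ Set.Ioo (0 : ℝ) 1) → (∀ k l, Θ' k l ∈ Set.Ioo (0 : ℝ) 1) →
      ∀ τ τ' : Fin N → Fin K → ℝ,
        (∀ i k, 0 ≤ τ i k) → (∀ i, ∑ k, τ i k = 1) →
        (∀ i k, 0 ≤ τ' i k) → (∀ i, ∑ k, τ' i k = 1) →
        (ELBO A Θ τ (fun k => (∑ i, τ i k) / N) ≤
            ELBO A Θ' τ' (fun k => (∑ i, τ' i k) / N) ↔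
          Jobj A Θ' (fun i k => τ' i k / N) ≤ Jobj A Θ (fun i k => τ i k / N))) := by
  refine ⟨fun Θ _ τ _ hsum => ?_, fun Θ Θ' _ _ τ τ' _ hsum _ hsum' => ?_⟩
  · rw [ELBO_colMean_eq_neg_Jobj hN A Θ τ hsum, Jobj]
    ring
  · rw [ELBO_colMean_eq_neg_Jobj hN A Θ τ hsum, ELBO_colMean_eq_neg_Jobj hN A Θ' τ' hsum',
      sub_le_sub_iff_right, neg_le_neg_iff]
    exact mul_le_mul_iff_right₀ (by positivity)

/-- with `α̂_k = N⁻¹ ∑_i τ_{ik}` and `T = τ/N`, the ELBO satisfies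
`𝓛(τ,Θ,α̂) = (N²/2)[∑ log p(A_{ij}|Θ_{kl}) T_{ik}T_{jl} + (2/N)(H(T) − H(T^⊤1_N))] − N log N`;
consequently, maximizing the ELBO over `(τ,Θ)` with `α = α̂` is equivalent to minimizing
`Jobj` over `T ∈ 𝒰_K(1_N/N)` and `Θ`. -/
theorem stmt9 (N K : ℕ) (hN : 0 < N) (hK : 0 < K)
    (A : Matrix (Fin N) (Fin N) ℝ)
    (hAsymm : ∀ i j, A i j = A j i)
    (hAdiag : ∀ i, A i i = 0)
    (hA01 : ∀ i j, A i j = 0 ∨ A i j = 1) :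
    (∀ Θ : Matrix (Fin K) (Fin K) ℝ, (∀ k l, Θ k l ∈ Set.Ioo (0 : ℝ) 1) →
      ∀ τ : Fin N → Fin K → ℝ, (∀ i k, 0 ≤ τ i k) → (∀ i, ∑ k, τ i k = 1) →
        ELBO A Θ τ (fun k => (∑ i, τ i k) / N) =
          ((N : ℝ) ^ 2 / 2) *
              (∑ i, ∑ j, ∑ k, ∑ l,
                  logpConv A Θ i j k l * (τ i k / N) * (τ j l / N)
                + (2 / (N : ℝ)) *
                  (Hent (fun i k => τ i k / N) - HentCol (fun i k => τ i k / N)))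
            - (N : ℝ) * Real.log N) ∧
    (∀ Θ Θ' : Matrix (Fin K) (Fin K) ℝ,
      (∀ k l, Θ k l ∈ Set.Ioo (0 : ℝ) 1) → (∀ k l, Θ' k l ∈ Set.Ioo (0 : ℝ) 1) →
      ∀ τ τ' : Fin N → Fin K → ℝ,
        (∀ i k, 0 ≤ τ i k) → (∀ i, ∑ k, τ i k = 1) →
        (∀ i k, 0 ≤ τ' i k) → (∀ i, ∑ k, τ' i k = 1) →
        (ELBO A Θ τ (fun k => (∑ i, τ i k) / N) ≤
            ELBO A Θ' τ' (fun k => (∑ i, τ' i k) / N) ↔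
          Jobj A Θ' (fun i k => τ' i k / N) ≤ Jobj A Θ (fun i k => τ i k / N))) :=
  stmt9_general N K hN A
end

section
/- Let ℓ(a,b) = f₁(a) + g(b) − h₁(a)h₂(b) be a composite inner loss where g and h₂ are differentiable on an open interval I ⊆ ℝ with h₂' nonvanishing on I, and suppose the map φ := g'/h₂' is injective on I. Fix A ∈ ℝ^{N×N} and T ∈ 𝒰_K(1_N/N), and set h := T^⊤ 1_N; assume h_k > 0 for all k. Then Θ ∈ I^{K×K} is a critical point of the map Θ ↦ L_ℓ(T,Θ) := ∑_{i,j,k,l} ℓ(A_{ij}, Θ_{kl}) T_{ik} T_{jl} if and only if φ(Θ_{kl}) = (T^⊤ h₁(A) T)_{kl} / (h_k h_l) for all k,l, where h₁(A) denotes the matrix with entries h₁(A_{ij}); equivalently Θ = φ^{-1}( T^⊤ h₁(A) T ⊘ h h^⊤ ) entrywise. -/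
/-! Only the summands with `(k', l') = (k, l)` depend on `Θ_{kl}`, so the partial derivative is
`g'(Θ_{kl}) h_k h_l - h₂'(Θ_{kl}) (Tᵀ h₁(A) T)_{kl}`; as `h₂' ≠ 0` and `h_k h_l > 0`, it vanishes
exactly when `φ(Θ_{kl}) = (Tᵀ h₁(A) T)_{kl} / (h_k h_l)`. -/

open Finset

theorem hasDerivAt_sum_mul_mul_ite_entry {ι κ : Type*} [Fintype ι] [Fintype κ] [DecidableEq κ]
    (F : ι → ι → ℝ → ℝ) (F' : ι → ι → ℝ)
    (T : Matrix ι κ ℝ) (Θ : Matrix κ κ ℝ) (k l : κ)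
    (hF : ∀ i j, HasDerivAt (F i j) (F' i j) (Θ k l)) :
    HasDerivAt (fun θ => ∑ i, ∑ j, ∑ k', ∑ l',
        F i j (if k' = k ∧ l' = l then θ else Θ k' l') * T i k' * T j l')
      (∑ i, ∑ j, F' i j * T i k * T j l) (Θ k l) := by
  have hentry : ∀ i j k' l', HasDerivAt
      (fun θ => F i j (if k' = k ∧ l' = l then θ else Θ k' l') * T i k' * T j l')
      (if k' = k ∧ l' = l then F' i j * T i k' * T j l' else 0) (Θ k l) := by
    intro i j k' l'
    split_ifs
    · exact ((hF i j).mul_const _).mul_const _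
    · exact hasDerivAt_const _ _
  have hcollapse : ∑ i, ∑ j, ∑ k', ∑ l',
      (if k' = k ∧ l' = l then F' i j * T i k' * T j l' else 0) =
        ∑ i, ∑ j, F' i j * T i k * T j l := by
    simp only [ite_and, sum_ite_irrel, sum_ite_eq', mem_univ, if_true, sum_const_zero]
  rw [← hcollapse]
  exact HasDerivAt.fun_sum fun i _ => HasDerivAt.fun_sum fun j _ =>
    HasDerivAt.fun_sum fun k' _ => HasDerivAt.fun_sum fun l' _ => hentry i j k' l'

theorem sum_sum_sub_mul_mul {ι κ : Type*} [Fintype ι] (a b : ℝ) (c : Matrix ι ι ℝ)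
    (T : Matrix ι κ ℝ) (k l : κ) :
    ∑ i, ∑ j, (a - c i j * b) * T i k * T j l =
      a * ((∑ i, T i k) * ∑ j, T j l) - b * ∑ i, ∑ j, T i k * c i j * T j l := by
  rw [sum_mul_sum]
  simp only [mul_sum, ← sum_sub_distrib]
  exact sum_congr rfl fun i _ => sum_congr rfl fun j _ => by ring

theorem stmt11_general (N K : ℕ)
    (I : Set ℝ)
    (f₁ g h₁ h₂ : ℝ → ℝ)
    (hg : ∀ x ∈ I, DifferentiableAt ℝ g x)
    (hh₂ : ∀ x ∈ I, DifferentiableAt ℝ h₂ x)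
    (hh₂' : ∀ x ∈ I, deriv h₂ x ≠ 0)
    (ℓ : ℝ → ℝ → ℝ) (hℓ : ∀ a b, ℓ a b = f₁ a + g b - h₁ a * h₂ b)
    (A : Matrix (Fin N) (Fin N) ℝ)
    (T : Matrix (Fin N) (Fin K) ℝ)
    (h : Fin K → ℝ) (hh : ∀ k, h k = ∑ i, T i k) (hhpos : ∀ k, 0 < h k)
    (Θ : Matrix (Fin K) (Fin K) ℝ) (hΘ : ∀ k l, Θ k l ∈ I) :
    (∀ k l : Fin K,
      deriv (fun θ : ℝ => ∑ i, ∑ j, ∑ k', ∑ l',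
          ℓ (A i j) (if k' = k ∧ l' = l then θ else Θ k' l') * T i k' * T j l')
        (Θ k l) = 0) ↔
    (∀ k l : Fin K,
      deriv g (Θ k l) / deriv h₂ (Θ k l) =
        (∑ i, ∑ j, T i k * h₁ (A i j) * T j l) / (h k * h l)) := by
  refine forall₂_congr fun k l => ?_
  have hloss : ∀ i j, HasDerivAt (ℓ (A i j))
      (deriv g (Θ k l) - h₁ (A i j) * deriv h₂ (Θ k l)) (Θ k l) := by
    intro i j
    rw [show ℓ (A i j) = fun b => f₁ (A i j) + g b - h₁ (A i j) * h₂ b from funext (hℓ _)]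
    exact ((hg _ (hΘ k l)).hasDerivAt.const_add _).sub
      ((hh₂ _ (hΘ k l)).hasDerivAt.const_mul _)
  rw [(hasDerivAt_sum_mul_mul_ite_entry _ _ T Θ k l hloss).deriv,
    sum_sum_sub_mul_mul _ _ (fun i j => h₁ (A i j)),
    ← hh, ← hh, sub_eq_zero,
    div_eq_div_iff (hh₂' _ (hΘ k l)) (mul_pos (hhpos k) (hhpos l)).ne',
    mul_comm (deriv h₂ (Θ k l))]

/-- for a composite inner loss `ℓ(a,b) = f₁(a) + g(b) − h₁(a)h₂(b)` with
`h₂'` nonvanishing and `φ = g'/h₂'` injective on an open interval `I`, and `T ∈ 𝒰_K(1_N/N)`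
with positive column sums `h`, a matrix `Θ ∈ I^{K×K}` is a critical point of
`Θ ↦ L_ℓ(T,Θ) = ∑ ℓ(A_{ij},Θ_{kl}) T_{ik}T_{jl}` (all partial derivatives vanish) iff
`φ(Θ_{kl}) = (T^⊤ h₁(A) T)_{kl} / (h_k h_l)` for all `k,l`. -/
theorem stmt11 (N K : ℕ) (hN : 0 < N) (hK : 0 < K)
    (I : Set ℝ) (hIopen : IsOpen I) (hIinterval : I.OrdConnected)
    (f₁ g h₁ h₂ : ℝ → ℝ)
    (hg : ∀ x ∈ I, DifferentiableAt ℝ g x)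
    (hh₂ : ∀ x ∈ I, DifferentiableAt ℝ h₂ x)
    (hh₂' : ∀ x ∈ I, deriv h₂ x ≠ 0)
    (hφinj : Set.InjOn (fun x => deriv g x / deriv h₂ x) I)
    (ℓ : ℝ → ℝ → ℝ) (hℓ : ∀ a b, ℓ a b = f₁ a + g b - h₁ a * h₂ b)
    (A : Matrix (Fin N) (Fin N) ℝ)
    (T : Matrix (Fin N) (Fin K) ℝ) (hT : T ∈ UK N K)
    (h : Fin K → ℝ) (hh : ∀ k, h k = ∑ i, T i k) (hhpos : ∀ k, 0 < h k)
    (Θ : Matrix (Fin K) (Fin K) ℝ) (hΘ : ∀ k l, Θ k l ∈ I) :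
    (∀ k l : Fin K,
      deriv (fun θ : ℝ => ∑ i, ∑ j, ∑ k', ∑ l',
          ℓ (A i j) (if k' = k ∧ l' = l then θ else Θ k' l') * T i k' * T j l')
        (Θ k l) = 0) ↔
    (∀ k l : Fin K,
      deriv g (Θ k l) / deriv h₂ (Θ k l) =
        (∑ i, ∑ j, T i k * h₁ (A i j) * T j l) / (h k * h l)) :=
  stmt11_general N K I f₁ g h₁ h₂ hg hh₂ hh₂' ℓ hℓ A T h hh hhpos Θ hΘ
end

section
/- Let M and M_U be symmetric N×N real matrices, let Θ ∈ ℝ^{K×K}, let U be differentiable at each Θ_{kl}, and suppose there exists c > 0 with |U'(Θ_{kl})| ≤ c for all k,l. Then for every T ∈ 𝒰_K(1_N/N): | ∑_{i,j,k,l} ( M_{U,ij} − U'(Θ_{kl}) M_{ij} ) T_{ik} T_{jl} | ≤ (1/N) ‖M_U‖_op + c (K²/N) ‖M‖_op, where ‖·‖_op denotes the spectral (operator) norm. In particular, for a Bernoulli SBM with M = A − E[A|Z] and M_U the matrix with entries U(A_{ij}) − E[U(A_{ij})|Z], this bounds sup over T ∈ 𝒰_K(1_N/N) of |L_U(T,Θ)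 − E[L_U(T,Θ)|Z]|, where L_U(T,Θ) := ∑_{i,j,k,l} D_U(A_{ij},Θ_{kl}) T_{ik}T_{jl}. -/
/-!
Summing over `k, l` splits the sum into `MU` tested against the row-sum vector `T *ᵥ 1`, whose
entries are all `1/N`, minus the `K²` terms `U'(Θ_{kl}) ⟨T_{·k}, M T_{·l}⟩`. Every vector involved
has entries in `[0, 1/N]`, hence Euclidean norm at most `1/√N`, so Cauchy–Schwarz bounds each
bilinear form by `‖·‖_op / N`.
-/

open Finset

/-- The spectral (ℓ²→ℓ² operator) norm of a square real matrix. -/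
noncomputable def opNorm {N : ℕ} (M : Matrix (Fin N) (Fin N) ℝ) : ℝ :=
  ‖Matrix.toEuclideanCLM (𝕜 := ℝ) M‖

open Matrix

lemma sum_sub_mul_mul_eq {R : Type*} [CommRing R] {n m : Type*} [Fintype n] [Fintype m]
    (A M : Matrix n n R) (d : Matrix m m R) (T : Matrix n m R) :
    ∑ i, ∑ j, ∑ k, ∑ l, (A i j - d k l * M i j) * T i k * T j l =
      (T *ᵥ 1) ⬝ᵥ A *ᵥ (T *ᵥ 1) - ∑ k, ∑ l, d k l * (Tᵀ k ⬝ᵥ M *ᵥ Tᵀ l) := by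
  simp only [sub_mul, sum_sub_distrib]
  congr 1
  · simp only [dotProduct, mulVec, Pi.one_apply, mul_one, mul_sum, sum_mul]
    refine sum_congr rfl fun i _ => sum_congr rfl fun j _ => ?_
    rw [sum_comm]
    exact sum_congr rfl fun l _ => sum_congr rfl fun k _ => by ring
  · simp only [sum_comm (γ := n) (α := m), dotProduct, mulVec, transpose_apply, mul_sum]
    exact sum_congr rfl fun k _ => sum_congr rfl fun l _ =>
      sum_congr rfl fun i _ => sum_congr rfl fun j _ => by ring

lemma abs_sum_sum_le_card_sq_mul {m : Type*} [Fintype m] {f : m → m → ℝ} {B : ℝ}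
    (h : ∀ k l, |f k l| ≤ B) : |∑ k, ∑ l, f k l| ≤ Fintype.card m ^ 2 * B := by
  calc |∑ k, ∑ l, f k l| ≤ ∑ k, ∑ l, |f k l| :=
        (abs_sum_le_sum_abs _ _).trans (sum_le_sum fun k _ => abs_sum_le_sum_abs _ _)
    _ ≤ ∑ _k : m, ∑ _l : m, B := by gcongr with k _ l; exact h k l
    _ = Fintype.card m ^ 2 * B := by simp only [sum_const, card_univ, nsmul_eq_mul]; ring

lemma norm_toLp_le_sqrt_card_mul {ι : Type*} [Fintype ι] {x : ι → ℝ} {a : ℝ} (ha : 0 ≤ a)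
    (h : ∀ i, |x i| ≤ a) : ‖WithLp.toLp 2 x‖ ≤ √(Fintype.card ι) * a := by
  rw [← Real.sqrt_sq ha, ← Real.sqrt_mul (Nat.cast_nonneg _), EuclideanSpace.norm_eq]
  refine Real.sqrt_le_sqrt ?_
  calc ∑ i, ‖x i‖ ^ 2 ≤ ∑ _i : ι, a ^ 2 := by
        gcongr with i; exact (Real.norm_eq_abs _).trans_le (h i)
    _ = Fintype.card ι * a ^ 2 := by simp

lemma abs_dotProduct_mulVec_le_opNorm {N : ℕ} (M : Matrix (Fin N) (Fin N) ℝ) (x y : Fin N → ℝ) :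
    |x ⬝ᵥ M *ᵥ y| ≤ opNorm M * ‖WithLp.toLp 2 x‖ * ‖WithLp.toLp 2 y‖ := by
  calc |x ⬝ᵥ M *ᵥ y|
        = |inner ℝ (WithLp.toLp 2 x) (toEuclideanCLM (𝕜 := ℝ) M (WithLp.toLp 2 y))| := by
          rw [inner_toEuclideanCLM]
    _ ≤ ‖WithLp.toLp 2 x‖ * ‖toEuclideanCLM (𝕜 := ℝ) M (WithLp.toLp 2 y)‖ :=
        abs_real_inner_le_norm _ _
    _ ≤ ‖WithLp.toLp 2 x‖ * (opNorm M * ‖WithLp.toLp 2 y‖) := by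
        gcongr; exact (toEuclideanCLM (𝕜 := ℝ) M).le_opNorm _
    _ = opNorm M * ‖WithLp.toLp 2 x‖ * ‖WithLp.toLp 2 y‖ := by ring

lemma abs_dotProduct_mulVec_le_opNorm_div {N : ℕ} (M : Matrix (Fin N) (Fin N) ℝ)
    {x y : Fin N → ℝ} (hx : ∀ i, |x i| ≤ 1 / N) (hy : ∀ i, |y i| ≤ 1 / N) :
    |x ⬝ᵥ M *ᵥ y| ≤ opNorm M / N := by
  have hinv : (0 : ℝ) ≤ 1 / N := by positivity
  calc |x ⬝ᵥ M *ᵥ y| ≤ opNorm M * ‖WithLp.toLp 2 x‖ * ‖WithLp.toLp 2 y‖ :=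
        abs_dotProduct_mulVec_le_opNorm M x y
    _ ≤ opNorm M * (√N * (1 / N)) * (√N * (1 / N)) := by
        have hop : 0 ≤ opNorm M := norm_nonneg _
        gcongr
        · simpa only [Fintype.card_fin] using norm_toLp_le_sqrt_card_mul hinv hx
        · simpa only [Fintype.card_fin] using norm_toLp_le_sqrt_card_mul hinv hy
    _ = opNorm M / N := by
        rw [mul_one_div, Real.sqrt_div_self', mul_assoc, one_div_mul_one_div,
          Real.mul_self_sqrt (Nat.cast_nonneg N), mul_one_div]

section

variable {N K : ℕ} {T : Matrix (Fin N) (Fin K) ℝ}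

lemma abs_le_of_mem_UK (hT : T ∈ UK N K) (i : Fin N) (k : Fin K) : |T i k| ≤ 1 / N := by
  rw [abs_of_nonneg (hT.1 i k), ← hT.2 i]
  exact single_le_sum (fun k _ => hT.1 i k) (mem_univ k)

lemma mulVec_one_of_mem_UK (hT : T ∈ UK N K) : T *ᵥ 1 = fun _ => 1 / (N : ℝ) := by
  ext i
  simpa [mulVec, dotProduct] using hT.2 i

end

theorem stmt14_general (N K : ℕ)
    (M MU : Matrix (Fin N) (Fin N) ℝ)
    (Θ : Matrix (Fin K) (Fin K) ℝ)
    (U : ℝ → ℝ)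
    (c : ℝ) (hUc : ∀ k l, |deriv U (Θ k l)| ≤ c) :
    ∀ T ∈ UK N K,
      |∑ i, ∑ j, ∑ k, ∑ l, (MU i j - deriv U (Θ k l) * M i j) * T i k * T j l| ≤
        (1 / (N : ℝ)) * opNorm MU + c * ((K : ℝ) ^ 2 / N) * opNorm M := by
  intro T hT
  have hrow : ∀ i, |(T *ᵥ 1) i| ≤ 1 / N := by simp [mulVec_one_of_mem_UK hT]
  have hterm : ∀ k l, |deriv U (Θ k l) * (Tᵀ k ⬝ᵥ M *ᵥ Tᵀ l)| ≤ c * (opNorm M / N) := fun k l => by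
    rw [abs_mul]
    exact mul_le_mul (hUc k l) (abs_dotProduct_mulVec_le_opNorm_div M (abs_le_of_mem_UK hT · k)
      (abs_le_of_mem_UK hT · l)) (abs_nonneg _) ((abs_nonneg _).trans (hUc k l))
  calc _ = |(T *ᵥ 1) ⬝ᵥ MU *ᵥ (T *ᵥ 1) - ∑ k, ∑ l, deriv U (Θ k l) * (Tᵀ k ⬝ᵥ M *ᵥ Tᵀ l)| := by
        rw [sum_sub_mul_mul_eq MU M (fun k l => deriv U (Θ k l)) T]
    _ ≤ opNorm MU / N + K ^ 2 * (c * (opNorm M / N)) :=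
        (abs_sub _ _).trans (add_le_add (abs_dotProduct_mulVec_le_opNorm_div MU hrow hrow)
          (by simpa using abs_sum_sum_le_card_sq_mul hterm))
    _ = (1 / (N : ℝ)) * opNorm MU + c * ((K : ℝ) ^ 2 / N) * opNorm M := by ring

/-- for symmetric `M, M_U` and `|U'(Θ_{kl})| ≤ c`, for every `T ∈ 𝒰_K(1_N/N)`,
`|∑ (M_{U,ij} − U'(Θ_{kl}) M_{ij}) T_{ik}T_{jl}| ≤ (1/N)‖M_U‖_op + c (K²/N) ‖M‖_op`. -/
theorem stmt14 (N K : ℕ) (hN : 0 < N) (hK : 0 < K)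
    (M MU : Matrix (Fin N) (Fin N) ℝ)
    (hM : M.IsSymm) (hMU : MU.IsSymm)
    (Θ : Matrix (Fin K) (Fin K) ℝ)
    (U : ℝ → ℝ) (hU : ∀ k l, DifferentiableAt ℝ U (Θ k l))
    (c : ℝ) (hc : 0 < c) (hUc : ∀ k l, |deriv U (Θ k l)| ≤ c) :
    ∀ T ∈ UK N K,
      |∑ i, ∑ j, ∑ k, ∑ l, (MU i j - deriv U (Θ k l) * M i j) * T i k * T j l| ≤
        (1 / (N : ℝ)) * opNorm MU + c * ((K : ℝ) ^ 2 / N) * opNorm M :=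
  stmt14_general N K M MU Θ U c hUc
end

section
/- Let Z : {1,…,N} → {1,…,K} be a surjective label assignment with one-hot membership matrix Z ∈ {0,1}^{N×K}, and set α̂_k := (1/N)·|{i : Z_i = k}| > 0 for each k. Define the projection π_N : 𝒰_K(1_N/N) → ℝ^{K×K} by π_N(T)_{kl} := (∑_{i : Z_i = k} T_{il}) / α̂_k. Then for every T ∈ 𝒰_K(1_N/N): ‖T − Z/N‖₁ ≤ ‖π_N(T) − I_K‖₁, where ‖·‖₁ denotes the entrywise ℓ¹ norm of a matrix and I_K the K×K identity matrix. -/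
open Finset

/-- for a surjective assignment `Z` with empirical proportions
`α̂_k = |{i : Z_i = k}|/N > 0` and projection `π_N(T)_{kl} = (∑_{i : Z_i = k} T_{il})/α̂_k`,
every `T ∈ 𝒰_K(1_N/N)` satisfies `‖T − Z/N‖₁ ≤ ‖π_N(T) − I_K‖₁`. -/
theorem stmt15 (N K : ℕ) (hN : 0 < N) (hK : 0 < K)
    (Z : Fin N → Fin K) (hZ : Function.Surjective Z)
    (αhat : Fin K → ℝ)
    (hαhat : ∀ k, αhat k = ((Finset.univ.filter fun i => Z i = k).card : ℝ) / N)
    (hαpos : ∀ k, 0 < αhat k)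
    (πN : Matrix (Fin N) (Fin K) ℝ → Matrix (Fin K) (Fin K) ℝ)
    (hπN : ∀ T k l, πN T k l = (∑ i ∈ Finset.univ.filter fun i => Z i = k, T i l) / αhat k) :
    ∀ T ∈ UK N K,
      ∑ i, ∑ k, |T i k - if Z i = k then 1 / (N : ℝ) else 0| ≤
        ∑ k, ∑ l, |πN T k l - if k = l then 1 else 0| := by
  intro T hT
  obtain ⟨hpos, hsum⟩ := hT
  have hNpos : (0:ℝ) < N := by exact_mod_cast hN
  have hTle : ∀ i k, T i k ≤ 1 / (N:ℝ) := fun i k => by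
    rw [← hsum i]
    exact Finset.single_le_sum (fun l _ => hpos i l) (Finset.mem_univ k)
  have hgroup : ∑ i, ∑ k, |T i k - if Z i = k then 1 / (N : ℝ) else 0|
      = ∑ k, ∑ i ∈ Finset.univ.filter fun i => Z i = k,
          ∑ l, |T i l - if Z i = l then 1 / (N : ℝ) else 0| :=
    (Finset.sum_fiberwise _ _ _).symm
  rw [hgroup]
  apply Finset.sum_le_sum
  intro k _
  have hα1 : αhat k ≤ 1 := by
    rw [hαhat k, div_le_one hNpos]
    exact_mod_cast (Finset.card_filter_le _ _).trans (le_of_eq (by simp))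
  have hαpos' := hαpos k
  rw [Finset.sum_comm]
  apply Finset.sum_le_sum
  intro l _
  have hSnn : 0 ≤ ∑ i ∈ Finset.univ.filter (fun i => Z i = k), T i l :=
    Finset.sum_nonneg fun i _ => hpos i l
  set S := ∑ i ∈ Finset.univ.filter (fun i => Z i = k), T i l with hS
  rw [hπN]
  by_cases hkl : k = l
  · subst hkl
    have h1 : ∀ i ∈ Finset.univ.filter (fun i => Z i = k),
        |T i k - if Z i = k then 1 / (N:ℝ) else 0| = 1/(N:ℝ) - T i k := by
      intro i hi
      rw [Finset.mem_filter] at hi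
      rw [if_pos hi.2, abs_of_nonpos (by linarith [hTle i k])]
      ring
    have hSle : S ≤ αhat k := by
      rw [hαhat k]
      calc S ≤ ∑ _i ∈ Finset.univ.filter (fun i => Z i = k), 1/(N:ℝ) :=
            Finset.sum_le_sum fun i _ => hTle i k
        _ = _ := by rw [Finset.sum_const, nsmul_eq_mul]; ring
    have hP : S / αhat k ≤ 1 := by
      rw [div_le_one hαpos']; exact hSle
    rw [Finset.sum_congr rfl h1, Finset.sum_sub_distrib, Finset.sum_const,
      nsmul_eq_mul, if_pos rfl, ← hS, abs_of_nonpos (by linarith)]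
    have hcard : ((Finset.univ.filter fun i => Z i = k).card : ℝ) * (1/(N:ℝ)) = αhat k := by
      rw [hαhat k]; ring
    rw [hcard]
    have hc : αhat k * (S / αhat k) = S := mul_div_cancel₀ _ hαpos'.ne'
    nlinarith [mul_nonneg (by linarith : (0:ℝ) ≤ 1 - αhat k)
      (by linarith : (0:ℝ) ≤ 1 - S / αhat k)]
  · have h1 : ∀ i ∈ Finset.univ.filter (fun i => Z i = k),
        |T i l - if Z i = l then 1 / (N:ℝ) else 0| = T i l := by
      intro i hi
      rw [Finset.mem_filter] at hi
      rw [if_neg (by rw [hi.2]; exact hkl), sub_zero, abs_of_nonneg (hpos i l)]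
    rw [Finset.sum_congr rfl h1, if_neg hkl, sub_zero,
      abs_of_nonneg (div_nonneg hSnn hαpos'.le), le_div_iff₀ hαpos']
    nlinarith
end

section
/- Let d : ℝ × ℝ → [0,∞), let Z : {1,…,N} → {1,…,K} be a surjective label assignment with α̂_k := (1/N)·|{i : Z_i = k}|, let Θ ∈ ℝ^{K×K}, and define F_N(T) := ∑_{i≠j} ∑_{k',l'} d(Θ_{Z_i Z_j}, Θ_{k'l'}) T_{ik'} T_{jl'} for T ∈ 𝒰_K(1_N/N), f_N(B) := ∑_{k,k',l,l'} α̂_k α̂_l B_{kk'} B_{ll'} d(Θ_{kl}, Θ_{k'l'}) for B ∈ ℝ^{K×K}, π_N(T)_{kl} := (∑_{i : Z_i = k} T_{il}) / α̂_k, and Δ(Θ) := max_{k,k',l'} d(Θ_{kk}, Θ_{k'l'}). Then for every T ∈ 𝒰_K(1_N/N): F_N(T) ≥ f_N(π_N(T)) − Δ(Θ) K² / N. -/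
open Finset

/-- with `F_N(T) = ∑_{i≠j} ∑_{k',l'} d(Θ_{Z_iZ_j},Θ_{k'l'}) T_{ik'}T_{jl'}`,
`f_N(B) = ∑ α̂_k α̂_l B_{kk'} B_{ll'} d(Θ_{kl},Θ_{k'l'})`,
`π_N(T)_{kl} = (∑_{i : Z_i = k} T_{il})/α̂_k` and `Δ(Θ) = max_{k,k',l'} d(Θ_{kk},Θ_{k'l'})`,
every `T ∈ 𝒰_K(1_N/N)` satisfies `F_N(T) ≥ f_N(π_N(T)) − Δ(Θ) K²/N`. -/
theorem stmt16 (N K : ℕ) (hN : 0 < N) (hK : 0 < K)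
    (d : ℝ → ℝ → ℝ) (hd_nonneg : ∀ a b, 0 ≤ d a b)
    (Z : Fin N → Fin K) (hZ : Function.Surjective Z)
    (αhat : Fin K → ℝ)
    (hαhat : ∀ k, αhat k = ((Finset.univ.filter fun i => Z i = k).card : ℝ) / N)
    (Θ : Matrix (Fin K) (Fin K) ℝ)
    (FN : Matrix (Fin N) (Fin K) ℝ → ℝ)
    (hFN : ∀ T, FN T = ∑ i, ∑ j, if i = j then 0 else
      ∑ k', ∑ l', d (Θ (Z i) (Z j)) (Θ k' l') * T i k' * T j l')
    (fN : Matrix (Fin K) (Fin K) ℝ → ℝ)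
    (hfN : ∀ B, fN B = ∑ k, ∑ k', ∑ l, ∑ l',
      αhat k * αhat l * B k k' * B l l' * d (Θ k l) (Θ k' l'))
    (πN : Matrix (Fin N) (Fin K) ℝ → Matrix (Fin K) (Fin K) ℝ)
    (hπN : ∀ T k l, πN T k l = (∑ i ∈ Finset.univ.filter fun i => Z i = k, T i l) / αhat k)
    (Δ : ℝ) (hΔ : Δ = ⨆ k : Fin K, ⨆ k' : Fin K, ⨆ l' : Fin K, d (Θ k k) (Θ k' l')) :
    ∀ T ∈ UK N K, fN (πN T) - Δ * (K : ℝ) ^ 2 / N ≤ FN T := by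
  intro T hT
  obtain ⟨hpos, hrow⟩ := hT
  have hNne : (N : ℝ) ≠ 0 := Nat.cast_ne_zero.mpr hN.ne'
  have hα : ∀ k, αhat k ≠ 0 := by
    intro k
    obtain ⟨i, hi⟩ := hZ k
    rw [hαhat]
    have hc : 0 < (Finset.univ.filter fun i => Z i = k).card :=
      Finset.card_pos.mpr ⟨i, Finset.mem_filter.mpr ⟨Finset.mem_univ i, hi⟩⟩
    positivity
  have hmul : ∀ k l, αhat k * πN T k l = ∑ i ∈ Finset.univ.filter fun i => Z i = k, T i l := by
    intro k l
    rw [hπN, mul_comm, div_mul_cancel₀ _ (hα k)]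
  have fiber : ∀ (g : Fin N → Fin K → ℝ),
      ∑ k, ∑ i ∈ Finset.univ.filter fun i => Z i = k, g i k = ∑ i, g i (Z i) := by
    intro g
    rw [← Finset.sum_fiberwise Finset.univ Z (fun i => g i (Z i))]
    exact Finset.sum_congr rfl fun k _ => Finset.sum_congr rfl fun i hi => by
      rw [(Finset.mem_filter.mp hi).2]
  have quad : ∀ (A B : Finset (Fin N)) (f : Fin N → Fin N → Fin K → Fin K → ℝ),
      ∑ k' : Fin K, ∑ l' : Fin K, ∑ i ∈ A, ∑ j ∈ B, f i j k' l'
        = ∑ i ∈ A, ∑ j ∈ B, ∑ k' : Fin K, ∑ l' : Fin K, f i j k' l' := by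
    intro A B f
    calc ∑ k' : Fin K, ∑ l' : Fin K, ∑ i ∈ A, ∑ j ∈ B, f i j k' l'
        = ∑ k' : Fin K, ∑ i ∈ A, ∑ l' : Fin K, ∑ j ∈ B, f i j k' l' :=
          Finset.sum_congr rfl fun k' _ => Finset.sum_comm
      _ = ∑ i ∈ A, ∑ k' : Fin K, ∑ l' : Fin K, ∑ j ∈ B, f i j k' l' := Finset.sum_comm
      _ = ∑ i ∈ A, ∑ k' : Fin K, ∑ j ∈ B, ∑ l' : Fin K, f i j k' l' :=
          Finset.sum_congr rfl fun i _ => Finset.sum_congr rfl fun k' _ => Finset.sum_comm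
      _ = ∑ i ∈ A, ∑ j ∈ B, ∑ k' : Fin K, ∑ l' : Fin K, f i j k' l' :=
          Finset.sum_congr rfl fun i _ => Finset.sum_comm
  have inner_eq : ∀ k l,
      ∑ k', ∑ l', αhat k * αhat l * πN T k k' * πN T l l' * d (Θ k l) (Θ k' l')
        = ∑ i ∈ Finset.univ.filter fun i => Z i = k,
            ∑ j ∈ Finset.univ.filter fun j => Z j = l,
              ∑ k', ∑ l', d (Θ k l) (Θ k' l') * T i k' * T j l' := by
    intro k l
    rw [← quad]
    refine Finset.sum_congr rfl fun k' _ => Finset.sum_congr rfl fun l' _ => ?_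
    have e1 : αhat k * αhat l * πN T k k' * πN T l l' * d (Θ k l) (Θ k' l')
        = (αhat k * πN T k k') * (αhat l * πN T l l') * d (Θ k l) (Θ k' l') := by ring
    rw [e1, hmul, hmul, Finset.sum_mul_sum, Finset.sum_mul]
    refine Finset.sum_congr rfl fun i _ => ?_
    rw [Finset.sum_mul]
    exact Finset.sum_congr rfl fun j _ => by ring
  have key : fN (πN T) = ∑ i, ∑ j, ∑ k', ∑ l',
      d (Θ (Z i) (Z j)) (Θ k' l') * T i k' * T j l' := by
    rw [hfN]
    calc ∑ k, ∑ k', ∑ l, ∑ l',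
          αhat k * αhat l * πN T k k' * πN T l l' * d (Θ k l) (Θ k' l')
        = ∑ k, ∑ l, ∑ k', ∑ l',
          αhat k * αhat l * πN T k k' * πN T l l' * d (Θ k l) (Θ k' l') :=
          Finset.sum_congr rfl fun k _ => Finset.sum_comm
      _ = ∑ k, ∑ l, ∑ i ∈ Finset.univ.filter fun i => Z i = k,
            ∑ j ∈ Finset.univ.filter fun j => Z j = l,
              ∑ k', ∑ l', d (Θ k l) (Θ k' l') * T i k' * T j l' :=
          Finset.sum_congr rfl fun k _ => Finset.sum_congr rfl fun l _ => inner_eq k l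
      _ = ∑ k, ∑ i ∈ Finset.univ.filter fun i => Z i = k, ∑ l,
            ∑ j ∈ Finset.univ.filter fun j => Z j = l,
              ∑ k', ∑ l', d (Θ k l) (Θ k' l') * T i k' * T j l' :=
          Finset.sum_congr rfl fun k _ => Finset.sum_comm
      _ = ∑ k, ∑ i ∈ Finset.univ.filter fun i => Z i = k,
            ∑ j, ∑ k', ∑ l', d (Θ k (Z j)) (Θ k' l') * T i k' * T j l' :=
          Finset.sum_congr rfl fun k _ => Finset.sum_congr rfl fun i _ =>
            fiber (fun j l => ∑ k', ∑ l', d (Θ k l) (Θ k' l') * T i k' * T j l')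
      _ = ∑ i, ∑ j, ∑ k', ∑ l', d (Θ (Z i) (Z j)) (Θ k' l') * T i k' * T j l' :=
          fiber (fun i k => ∑ j, ∑ k', ∑ l', d (Θ k (Z j)) (Θ k' l') * T i k' * T j l')
  -- diagonal bound
  have hTle : ∀ i k, T i k ≤ 1 / N := by
    intro i k
    rw [← hrow i]
    exact Finset.single_le_sum (fun k _ => hpos i k) (Finset.mem_univ k)
  have hdΔ : ∀ k k' l', d (Θ k k) (Θ k' l') ≤ Δ := by
    intro k k' l'
    rw [hΔ]
    calc d (Θ k k) (Θ k' l')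
        ≤ ⨆ l' : Fin K, d (Θ k k) (Θ k' l') :=
          le_ciSup (f := fun l' : Fin K => d (Θ k k) (Θ k' l'))
            (Set.Finite.bddAbove (Set.finite_range _)) l'
      _ ≤ ⨆ k' : Fin K, ⨆ l' : Fin K, d (Θ k k) (Θ k' l') :=
          le_ciSup (f := fun k' : Fin K => ⨆ l' : Fin K, d (Θ k k) (Θ k' l'))
            (Set.Finite.bddAbove (Set.finite_range _)) k'
      _ ≤ ⨆ k : Fin K, ⨆ k' : Fin K, ⨆ l' : Fin K, d (Θ k k) (Θ k' l') :=
          le_ciSup (f := fun k : Fin K => ⨆ k' : Fin K, ⨆ l' : Fin K, d (Θ k k) (Θ k' l'))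
            (Set.Finite.bddAbove (Set.finite_range _)) k
  have hΔ0 : 0 ≤ Δ := by
    obtain ⟨k0⟩ := Fin.pos_iff_nonempty.mp hK
    exact le_trans (hd_nonneg _ _) (hdΔ k0 k0 k0)
  have hNinv : (0:ℝ) ≤ 1 / N := by positivity
  have diag : ∑ i, ∑ k', ∑ l', d (Θ (Z i) (Z i)) (Θ k' l') * T i k' * T i l'
      ≤ Δ * (K : ℝ) ^ 2 / N := by
    have step : ∀ i : Fin N, ∀ k' l' : Fin K,
        d (Θ (Z i) (Z i)) (Θ k' l') * T i k' * T i l' ≤ Δ * (1 / N) * (1 / N) := by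
      intro i k' l'
      have h1 : d (Θ (Z i) (Z i)) (Θ k' l') * T i k' ≤ Δ * (1 / N) :=
        mul_le_mul (hdΔ _ _ _) (hTle i k') (hpos i k') hΔ0
      exact mul_le_mul h1 (hTle i l') (hpos i l') (by positivity)
    calc ∑ i, ∑ k', ∑ l', d (Θ (Z i) (Z i)) (Θ k' l') * T i k' * T i l'
        ≤ ∑ i : Fin N, ∑ k' : Fin K, ∑ l' : Fin K, Δ * (1 / N) * (1 / N) := by
          refine Finset.sum_le_sum fun i _ => Finset.sum_le_sum fun k' _ =>
            Finset.sum_le_sum fun l' _ => step i k' l'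
      _ = Δ * (K : ℝ) ^ 2 / N := by
          simp [Finset.sum_const, Finset.card_univ]
          field_simp
  -- split off the diagonal
  have split : (∑ i, ∑ j, ∑ k', ∑ l', d (Θ (Z i) (Z j)) (Θ k' l') * T i k' * T j l')
      = FN T + ∑ i, ∑ k', ∑ l', d (Θ (Z i) (Z i)) (Θ k' l') * T i k' * T i l' := by
    rw [hFN, ← Finset.sum_add_distrib]
    refine Finset.sum_congr rfl fun i _ => ?_
    have e : ∀ j, (if i = j then (0:ℝ) else
          ∑ k', ∑ l', d (Θ (Z i) (Z j)) (Θ k' l') * T i k' * T j l')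
        = (∑ k', ∑ l', d (Θ (Z i) (Z j)) (Θ k' l') * T i k' * T j l')
          - (if i = j then ∑ k', ∑ l', d (Θ (Z i) (Z j)) (Θ k' l') * T i k' * T j l' else 0) := by
      intro j; split <;> simp
    simp_rw [e]
    rw [Finset.sum_sub_distrib, Finset.sum_ite_eq]
    simp
  rw [key, split]
  linarith
end

section
/- Let ℓ₁, ℓ₂ : ℝ × ℝ → ℝ be two inner losses such that ℓ₁(a,b) − ℓ₂(a,b) = φ(a) for some function φ : ℝ → ℝ depending only on the first argument. Then for every A ∈ ℝ^{N×N}, every Θ ∈ ℝ^{K×K} and every T ∈ 𝒰_K(1_N/N): L_{ℓ₁}(T,Θ) − L_{ℓ₂}(T,Θ) = (1/N²) ∑_{i,j} φ(A_{ij}), where L_ℓ(T,Θ) := ∑_{i,j,k,l} ℓ(A_{ij},Θ_{kl}) T_{ik} T_{jl}. In particular this difference is independent of T and Θ, so the two objectives have the same minimizers over 𝒰_K(1_N/N) × ℝ^{K×K}. -/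
open Finset

/-- The srGW loss `L_ℓ(T,Θ) = ∑_{i,j,k,l} ℓ(A_{ij},Θ_{kl}) T_{ik}T_{jl}`. -/
def Lloss (ℓ : ℝ → ℝ → ℝ) {N K : ℕ} (A : Matrix (Fin N) (Fin N) ℝ)
    (T : Matrix (Fin N) (Fin K) ℝ) (Θ : Matrix (Fin K) (Fin K) ℝ) : ℝ :=
  ∑ i, ∑ j, ∑ k, ∑ l, ℓ (A i j) (Θ k l) * T i k * T j l

lemma key (N K : ℕ) (ℓ₁ ℓ₂ : ℝ → ℝ → ℝ) (φ : ℝ → ℝ)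
    (hφ : ∀ a b, ℓ₁ a b - ℓ₂ a b = φ a)
    (A : Matrix (Fin N) (Fin N) ℝ)
    (T : Matrix (Fin N) (Fin K) ℝ) (hT : T ∈ UK N K)
    (Θ : Matrix (Fin K) (Fin K) ℝ) :
    Lloss ℓ₁ A T Θ - Lloss ℓ₂ A T Θ = (1 / (N : ℝ) ^ 2) * ∑ i, ∑ j, φ (A i j) := by
  obtain ⟨-, hrow⟩ := hT
  unfold Lloss
  rw [Finset.mul_sum]
  rw [← Finset.sum_sub_distrib]
  refine Finset.sum_congr rfl fun i _ => ?_
  rw [Finset.mul_sum, ← Finset.sum_sub_distrib]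
  refine Finset.sum_congr rfl fun j _ => ?_
  rw [← Finset.sum_sub_distrib]
  have : ∀ k ∈ Finset.univ, (∑ l, ℓ₁ (A i j) (Θ k l) * T i k * T j l)
      - (∑ l, ℓ₂ (A i j) (Θ k l) * T i k * T j l)
      = φ (A i j) * T i k * (1 / N) := by
    intro k _
    rw [← Finset.sum_sub_distrib]
    have : ∀ l ∈ Finset.univ, ℓ₁ (A i j) (Θ k l) * T i k * T j l
        - ℓ₂ (A i j) (Θ k l) * T i k * T j l = φ (A i j) * T i k * T j l := by
      intro l _
      rw [← hφ (A i j) (Θ k l)]; ring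
    rw [Finset.sum_congr rfl this]
    rw [← Finset.mul_sum, hrow j]
  rw [Finset.sum_congr rfl this]
  have : ∑ k, φ (A i j) * T i k * (1 / (N:ℝ)) = φ (A i j) * (1/N) * (1/N) := by
    rw [← Finset.sum_mul, ← Finset.mul_sum, hrow i]
  rw [this]; ring

/-- if two inner losses differ by a function of the first argument only,
`ℓ₁(a,b) − ℓ₂(a,b) = φ(a)`, then for every `T ∈ 𝒰_K(1_N/N)` and every `Θ`,
`L_{ℓ₁}(T,Θ) − L_{ℓ₂}(T,Θ) = (1/N²) ∑_{i,j} φ(A_{ij})`; in particular the difference is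
independent of `(T,Θ)`, so the two objectives have the same minimizers. -/
theorem stmt18 (N K : ℕ) (hN : 0 < N) (hK : 0 < K)
    (ℓ₁ ℓ₂ : ℝ → ℝ → ℝ) (φ : ℝ → ℝ)
    (hφ : ∀ a b, ℓ₁ a b - ℓ₂ a b = φ a)
    (A : Matrix (Fin N) (Fin N) ℝ) :
    (∀ T ∈ UK N K, ∀ Θ : Matrix (Fin K) (Fin K) ℝ,
      Lloss ℓ₁ A T Θ - Lloss ℓ₂ A T Θ = (1 / (N : ℝ) ^ 2) * ∑ i, ∑ j, φ (A i j)) ∧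
    (∀ T ∈ UK N K, ∀ Θ : Matrix (Fin K) (Fin K) ℝ,
      ((∀ T' ∈ UK N K, ∀ Θ' : Matrix (Fin K) (Fin K) ℝ,
          Lloss ℓ₁ A T Θ ≤ Lloss ℓ₁ A T' Θ') ↔
        (∀ T' ∈ UK N K, ∀ Θ' : Matrix (Fin K) (Fin K) ℝ,
          Lloss ℓ₂ A T Θ ≤ Lloss ℓ₂ A T' Θ'))) := by
  have hk := key N K ℓ₁ ℓ₂ φ hφ A
  refine ⟨fun T hT Θ => hk T hT Θ, fun T hT Θ => ?_⟩
  constructor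
  · intro h T' hT' Θ'
    have h1 := hk T hT Θ
    have h2 := hk T' hT' Θ'
    have := h T' hT' Θ'
    linarith
  · intro h T' hT' Θ'
    have h1 := hk T hT Θ
    have h2 := hk T' hT' Θ'
    have := h T' hT' Θ'
    linarith
end
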